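/- arXiv:2004.11731 — 13 statements merged into one kernel-verified Lean document; each statement's English description precedes it below -/
import Mathlib

section
/- Let n ≥ 1 and let p : Fin n → ℝ be real periods with p i ≥ 2 for every i and ∑ i, 1 / p i ≤ 7/12. Then there exists a feasible pinwheel schedule for the pseudo-instance p. -/
/-!
Round each period down to the form `d * 2 ^ e`. Jobs with periods `2 ^ e` and density
`∑ 2⁻ᵉ ≤ 1` can always be scheduled: a job of period `1` is then alone; otherwise halve all
periods and split the jobs into two bins of density at most `1`, served on alternate days (the
weights are powers of two, so a greedy choice fills a bin exactly). Interleaving `k` such bins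
serves periods `k * 2 ^ e` of total weight `∑ 2⁻ᵉ ≤ k`.

Rounding down to `d * 2 ^ e` less than doubles the density. This suffices when some period lies
in `[d, d + 1)` for `d = 2` or `3`, since that job alone rounds to exactly `d`. When all periods
are at least `4`, round to `4 * 2 ^ e`; this works unless the jobs with `p < 6 * 2 ^ e`, which
lose little in rounding, carry little density. Then the jobs with `p ≥ 6 * 2 ^ e` go, as far as
they fit, into three bins on odd days at period `6 * 2 ^ e`, and all other jobs on even days.
-/

/-- A pinwheel schedule `σ` is feasible for a pseudo-instance of real periods `p`
if every job `i` is scheduled at least once in every window of `⌊p i⌋` consecutive days. -/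
def PinwheelFeasibleR {n : ℕ} (p : Fin n → ℝ) (σ : ℕ → Option (Fin n)) : Prop :=
  ∀ (i : Fin n) (t : ℕ), ∃ s : ℕ, t ≤ s ∧ s < t + ⌊p i⌋₊ ∧ σ s = some i

/-- A pinwheel schedule `σ` is feasible for integer periods `p`
if every job `i` is scheduled at least once in every window of `p i` consecutive days. -/
def PinwheelFeasibleN {n : ℕ} (p : Fin n → ℕ) (σ : ℕ → Option (Fin n)) : Prop :=
  ∀ (i : Fin n) (t : ℕ), ∃ s : ℕ, t ≤ s ∧ s < t + p i ∧ σ s = some i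

/-- `lastCutPlusOne σ i t` is `t' + 1` where `t'` is the largest day `t' < t` with
`σ t' = some i` (bamboo `i` cut at the end of day `t'`), and `0` if there is no such day. -/
def lastCutPlusOne {n : ℕ} (σ : ℕ → Option (Fin n)) (i : Fin n) (t : ℕ) : ℕ :=
  Nat.findGreatest (fun u => 0 < u ∧ σ (u - 1) = some i) t

/-- The height reached by bamboo `i` on day `t` under trimming schedule `σ`:
`h i * (t + 1 - s)` where `s = lastCutPlusOne σ i t`. -/
noncomputable def bambooHeight {n : ℕ} (h : Fin n → ℝ) (σ : ℕ → Option (Fin n))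
    (i : Fin n) (t : ℕ) : ℝ :=
  h i * ((t + 1 : ℝ) - (lastCutPlusOne σ i t : ℝ))

/-- A trimming schedule `σ` achieves value `V` if the height reached by every
bamboo on every day is at most `V`. -/
noncomputable def TrimmingAchieves {n : ℕ} (h : Fin n → ℝ) (σ : ℕ → Option (Fin n))
    (V : ℝ) : Prop :=
  ∀ (i : Fin n) (t : ℕ), bambooHeight h σ i t ≤ V

namespace Pinwheel

variable {α ι : Type*}

def ScheduledWithin (σ : ℕ → Option α) (a : α) (W : ℕ) : Prop :=
  ∀ t, ∃ s, t ≤ s ∧ s < t + W ∧ σ s = some a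

theorem ScheduledWithin.mono {σ : ℕ → Option α} {a : α} {W W' : ℕ}
    (h : ScheduledWithin σ a W) (hW : W ≤ W') : ScheduledWithin σ a W' := fun t ↦ by
  obtain ⟨s, hts, hst, hs⟩ := h t
  exact ⟨s, hts, by omega, hs⟩

theorem scheduledWithin_const (a : α) : ScheduledWithin (fun _ ↦ some a) a 1 :=
  fun t ↦ ⟨t, le_rfl, by omega, rfl⟩

def interleave (k : ℕ) (σ : ℕ → ℕ → Option α) : ℕ → Option α :=
  fun t ↦ σ (t % k) (t / k)

theorem ScheduledWithin.interleave {k j W : ℕ} {σ : ℕ → ℕ → Option α} {a : α} (hj : j < k)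
    (h : ScheduledWithin (σ j) a W) : ScheduledWithin (interleave k σ) a (k * W) := by
  intro t
  -- `u` is the first index whose day `k * u + j` in the interleaved schedule is not before `t`
  set u := (t + k - 1 - j) / k
  obtain ⟨s, hus, hsu, hs⟩ := h u
  have hu₁ : k * u ≤ t + k - 1 - j := Nat.mul_div_le _ _
  have hu₂ : t + k - 1 - j < k * u + k := by
    simpa only [mul_add, mul_one] using Nat.lt_mul_div_succ (t + k - 1 - j) (show 0 < k by omega)
  have hs₁ : k * u ≤ k * s := Nat.mul_le_mul_left k hus
  have hs₂ : k * s + k ≤ k * u + k * W := by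
    simpa only [mul_add, mul_one] using Nat.mul_le_mul_left k (show s + 1 ≤ u + W by omega)
  refine ⟨k * s + j, by omega, by omega, ?_⟩
  simpa only [Pinwheel.interleave, Nat.mul_add_mod, Nat.mod_eq_of_lt hj,
    Nat.mul_add_div (by omega : 0 < k), Nat.div_eq_of_lt hj, add_zero] using hs

theorem exists_scheduledWithin_interleave {k : ℕ} {s : Finset ι} {b : ι → ℕ} (W : ι → ℕ)
    (hb : ∀ i ∈ s, b i < k)
    (hbin : ∀ j, ∃ σ : ℕ → Option ι, ∀ i ∈ s, b i = j → ScheduledWithin σ i (W i)) :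
    ∃ σ : ℕ → Option ι, ∀ i ∈ s, ScheduledWithin σ i (k * W i) := by
  choose σ hσ using hbin
  exact ⟨interleave k σ, fun i hi ↦ (hσ (b i) i hi rfl).interleave (hb i hi)⟩

theorem exists_subset_sum_two_pow_eq [DecidableEq ι] (g : ι → ℕ) (s : Finset ι) (C : ℕ)
    (hdvd : ∀ i ∈ s, 2 ^ g i ∣ C) (hC : C ≤ ∑ i ∈ s, 2 ^ g i) :
    ∃ t ⊆ s, ∑ i ∈ t, 2 ^ g i = C := by
  induction s using Finset.induction_on_max_value g generalizing C with
  | empty => exact ⟨∅, subset_rfl, by rw [Finset.sum_empty] at hC ⊢; omega⟩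
  | insert a s has hmax ih =>
    rcases Nat.eq_zero_or_pos C with rfl | hCpos
    · exact ⟨∅, Finset.empty_subset _, rfl⟩
    -- greedily take the heaviest job: every lighter weight divides it, hence the rest of `C`
    have haC : 2 ^ g a ≤ C := Nat.le_of_dvd hCpos (hdvd a (Finset.mem_insert_self a s))
    rw [Finset.sum_insert has] at hC
    obtain ⟨t, hts, ht⟩ := ih (C - 2 ^ g a)
      (fun i hi ↦ Nat.dvd_sub (hdvd i (Finset.mem_insert_of_mem hi))
        (Nat.pow_dvd_pow 2 (hmax i hi))) (by omega)
    refine ⟨insert a t, Finset.insert_subset_insert a hts, ?_⟩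
    rw [Finset.sum_insert (fun h ↦ has (hts h)), ht]
    omega

theorem exists_subset_sum_inv_two_pow_eq_min [DecidableEq ι] (e : ι → ℕ) (m : ℕ)
    (s : Finset ι) :
    ∃ t ⊆ s, ∑ i ∈ t, ((2 : ℝ) ^ e i)⁻¹ = min (m : ℝ) (∑ i ∈ s, ((2 : ℝ) ^ e i)⁻¹) := by
  by_cases hs : ∑ i ∈ s, ((2 : ℝ) ^ e i)⁻¹ ≤ m
  · exact ⟨s, subset_rfl, (min_eq_right hs).symm⟩
  rw [not_le] at hs
  -- scale by `2 ^ K` to make all weights natural powers of two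
  set K := s.sup e
  have hscale : ∀ t ⊆ s, ((∑ i ∈ t, 2 ^ (K - e i) : ℕ) : ℝ) = 2 ^ K * ∑ i ∈ t, ((2 : ℝ) ^ e i)⁻¹ :=
    fun t hts ↦ by
      push_cast
      rw [Finset.mul_sum]
      exact Finset.sum_congr rfl fun i hi ↦ pow_sub₀ 2 two_ne_zero (Finset.le_sup (hts hi))
  have hK : (0 : ℝ) < 2 ^ K := by positivity
  obtain ⟨t, hts, ht⟩ := exists_subset_sum_two_pow_eq (fun i ↦ K - e i) s (m * 2 ^ K)
    (fun i _ ↦ Dvd.dvd.mul_left (Nat.pow_dvd_pow 2 (Nat.sub_le K (e i))) m) (by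
      have : ((m * 2 ^ K : ℕ) : ℝ) ≤ ((∑ i ∈ s, 2 ^ (K - e i) : ℕ) : ℝ) := by
        rw [hscale s subset_rfl, Nat.cast_mul, Nat.cast_pow, Nat.cast_ofNat, mul_comm]
        exact mul_le_mul_of_nonneg_left hs.le hK.le
      exact_mod_cast this)
  refine ⟨t, hts, ?_⟩
  have := hscale t hts
  rw [ht, Nat.cast_mul, Nat.cast_pow, Nat.cast_ofNat, mul_comm] at this
  rw [min_eq_left hs.le]
  exact (mul_left_cancel₀ hK.ne' this).symm

theorem exists_bins_of_sum_inv_two_pow_le [DecidableEq ι] (e : ι → ℕ) (k : ℕ) (s : Finset ι)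
    (hs : ∑ i ∈ s, ((2 : ℝ) ^ e i)⁻¹ ≤ k) :
    ∃ b : ι → ℕ, (∀ i ∈ s, b i < k) ∧ ∀ j, ∑ i ∈ s with b i = j, ((2 : ℝ) ^ e i)⁻¹ ≤ 1 := by
  induction k generalizing s with
  | zero =>
    have : s = ∅ := by
      by_contra hne
      have := Finset.sum_pos (f := fun i ↦ ((2 : ℝ) ^ e i)⁻¹) (fun i _ ↦ by positivity)
        (Finset.nonempty_iff_ne_empty.2 hne)
      push_cast at hs
      linarith
    subst this
    exact ⟨fun _ ↦ 0, by simp, by simp⟩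
  | succ k ih =>
    obtain ⟨t, hts, ht⟩ := exists_subset_sum_inv_two_pow_eq_min e 1 s
    obtain ⟨b, hb, hbin⟩ := ih (s \ t) (by
      have := Finset.sum_sdiff hts (f := fun i ↦ ((2 : ℝ) ^ e i)⁻¹)
      rcases min_cases (1 : ℝ) (∑ i ∈ s, ((2 : ℝ) ^ e i)⁻¹) with h | h <;> push_cast at * <;>
        linarith)
    refine ⟨fun i ↦ if i ∈ t then k else b i, fun i hi ↦ ?_, fun j ↦ ?_⟩
    · by_cases hit : i ∈ t
      · simp [hit]
      · simpa [hit] using (hb i (Finset.mem_sdiff.2 ⟨hi, hit⟩)).trans (Nat.lt_succ_self k)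
    · refine le_trans (Finset.sum_le_sum_of_subset_of_nonneg (t := if j = k then t else
        (s \ t).filter (b · = j)) ?_ fun i _ _ ↦ by positivity) ?_
      · intro i hi
        obtain ⟨his, hij⟩ := Finset.mem_filter.1 hi
        dsimp only at hij
        by_cases hit : i ∈ t
        · rw [if_pos hit] at hij
          rwa [if_pos hij.symm]
        · rw [if_neg hit] at hij
          have hik := hb i (Finset.mem_sdiff.2 ⟨his, hit⟩)
          rw [if_neg (by omega)]
          exact Finset.mem_filter.2 ⟨Finset.mem_sdiff.2 ⟨his, hit⟩, hij⟩
      · split_ifs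
        · exact ht.le.trans (by simp)
        · exact hbin j

theorem exists_scheduledWithin_two_pow_of_eq_zero [DecidableEq ι] {e : ι → ℕ} {s : Finset ι}
    (hs : ∑ i ∈ s, ((2 : ℝ) ^ e i)⁻¹ ≤ 1) {i : ι} (hi : i ∈ s) (hi₀ : e i = 0) :
    ∃ σ : ℕ → Option ι, ∀ j ∈ s, ScheduledWithin σ j (2 ^ e j) := by
  refine ⟨fun _ ↦ some i, fun j hj ↦ ?_⟩
  obtain rfl : j = i := by
    by_contra hji
    have hpair := Finset.sum_le_sum_of_subset_of_nonneg (f := fun i ↦ ((2 : ℝ) ^ e i)⁻¹)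
      (Finset.insert_subset hi (Finset.singleton_subset_iff.2 hj)) fun _ _ _ ↦ by positivity
    rw [Finset.sum_pair (Ne.symm hji), hi₀] at hpair
    have : (0 : ℝ) < ((2 : ℝ) ^ e j)⁻¹ := by positivity
    norm_num at hpair
    linarith
  exact (scheduledWithin_const j).mono Nat.one_le_two_pow

theorem exists_scheduledWithin_two_pow [DecidableEq ι] (e : ι → ℕ) (s : Finset ι)
    (hs : ∑ i ∈ s, ((2 : ℝ) ^ e i)⁻¹ ≤ 1) :
    ∃ σ : ℕ → Option ι, ∀ i ∈ s, ScheduledWithin σ i (2 ^ e i) := by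
  suffices ∀ K (s : Finset ι) (e : ι → ℕ), (∀ i ∈ s, e i ≤ K) → ∑ i ∈ s, ((2 : ℝ) ^ e i)⁻¹ ≤ 1 →
      ∃ σ : ℕ → Option ι, ∀ i ∈ s, ScheduledWithin σ i (2 ^ e i) from
    this _ s e (fun i hi ↦ Finset.le_sup hi) hs
  intro K
  induction K with
  | zero =>
    intro s e hK hs
    rcases s.eq_empty_or_nonempty with rfl | ⟨i, hi⟩
    · exact ⟨fun _ ↦ none, by simp⟩
    · exact exists_scheduledWithin_two_pow_of_eq_zero hs hi (Nat.le_zero.1 (hK i hi))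
  | succ K ih =>
    intro s e hK hs
    by_cases h₀ : ∃ i ∈ s, e i = 0
    · obtain ⟨i, hi, hi₀⟩ := h₀
      exact exists_scheduledWithin_two_pow_of_eq_zero hs hi hi₀
    simp only [not_exists, not_and] at h₀
    -- all periods are even: halve them, split into two bins, and put the bins on alternate days
    have hhalf : ∀ i ∈ s, 2 * 2 ^ (e i - 1) = 2 ^ e i := fun i hi ↦ by
      rw [← pow_succ', Nat.sub_add_cancel (Nat.one_le_iff_ne_zero.2 (h₀ i hi))]
    have hsum : ∑ i ∈ s, ((2 : ℝ) ^ (e i - 1))⁻¹ ≤ (2 : ℕ) := by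
      have hterm : ∀ i ∈ s, ((2 : ℝ) ^ (e i - 1))⁻¹ = 2 * ((2 : ℝ) ^ e i)⁻¹ := fun i hi ↦ by
        rw [pow_sub₀ 2 two_ne_zero (Nat.one_le_iff_ne_zero.2 (h₀ i hi)), pow_one, mul_inv, inv_inv,
          mul_comm]
      rw [Finset.sum_congr rfl hterm, ← Finset.mul_sum]
      push_cast
      linarith
    obtain ⟨b, hb, hbin⟩ := exists_bins_of_sum_inv_two_pow_le (fun i ↦ e i - 1) 2 s hsum
    obtain ⟨σ, hσ⟩ := exists_scheduledWithin_interleave (fun i ↦ 2 ^ (e i - 1)) hb fun j ↦ by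
      obtain ⟨σ, hσ⟩ := ih (s.filter (b · = j)) (fun i ↦ e i - 1)
        (fun i hi ↦ by have := hK i (Finset.mem_filter.1 hi).1; omega) (hbin j)
      exact ⟨σ, fun i hi hij ↦ hσ i (Finset.mem_filter.2 ⟨hi, hij⟩)⟩
    exact ⟨σ, fun i hi ↦ hhalf i hi ▸ hσ i hi⟩

theorem exists_scheduledWithin_mul_two_pow [DecidableEq ι] (k : ℕ) (e : ι → ℕ) (s : Finset ι)
    (hs : ∑ i ∈ s, ((2 : ℝ) ^ e i)⁻¹ ≤ k) :
    ∃ σ : ℕ → Option ι, ∀ i ∈ s, ScheduledWithin σ i (k * 2 ^ e i) := by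
  obtain ⟨b, hb, hbin⟩ := exists_bins_of_sum_inv_two_pow_le e k s hs
  refine exists_scheduledWithin_interleave (fun i ↦ 2 ^ e i) hb fun j ↦ ?_
  obtain ⟨σ, hσ⟩ := exists_scheduledWithin_two_pow e (s.filter (b · = j)) (hbin j)
  exact ⟨σ, fun i hi hij ↦ hσ i (Finset.mem_filter.2 ⟨hi, hij⟩)⟩

theorem exists_scheduledWithin_mixed [Fintype ι] [DecidableEq ι] (e : ι → ℕ) (B : Finset ι)
    (hBc : ∑ i ∈ Bᶜ, ((2 : ℝ) ^ e i)⁻¹ ≤ 2) (hsum : ∑ i, ((2 : ℝ) ^ e i)⁻¹ ≤ 5) :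
    ∃ σ : ℕ → Option ι, (∀ i ∈ B, ScheduledWithin σ i (6 * 2 ^ e i)) ∧
      ∀ i ∉ B, ScheduledWithin σ i (4 * 2 ^ e i) := by
  -- odd days serve, in three dyadic bins, a part `T` of `B` of weight `min 3 _`;
  -- even days serve everybody else at period `4 * 2 ^ e i`
  obtain ⟨T, hTB, hT⟩ := exists_subset_sum_inv_two_pow_eq_min e 3 B
  obtain ⟨σ₁, hσ₁⟩ := exists_scheduledWithin_mul_two_pow 3 e T (by rw [hT]; exact min_le_left _ _)
  obtain ⟨σ₀, hσ₀⟩ := exists_scheduledWithin_two_pow (fun i ↦ e i + 1) Tᶜ (by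
    have hB := Finset.sum_compl_add_sum B (fun i ↦ ((2 : ℝ) ^ e i)⁻¹)
    have hT' := Finset.sum_compl_add_sum T (fun i ↦ ((2 : ℝ) ^ e i)⁻¹)
    simp only [pow_succ, mul_inv, ← Finset.sum_mul]
    rcases min_cases (3 : ℝ) (∑ i ∈ B, ((2 : ℝ) ^ e i)⁻¹) with h | h <;> push_cast at * <;>
      linarith)
  set σ := interleave 2 fun j ↦ if j = 0 then σ₀ else σ₁
  have hσ₀' : ∀ i ∉ T, ScheduledWithin σ i (4 * 2 ^ e i) := fun i hi ↦ by
    have := (hσ₀ i (Finset.mem_compl.2 hi)).interleave (k := 2) (j := 0)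
      (σ := fun j ↦ if j = 0 then σ₀ else σ₁) two_pos
    exact this.mono (le_of_eq (by ring))
  refine ⟨σ, fun i hi ↦ ?_, fun i hi ↦ hσ₀' i fun hiT ↦ hi (hTB hiT)⟩
  by_cases hiT : i ∈ T
  · have := (hσ₁ i hiT).interleave (k := 2) (j := 1) (σ := fun j ↦ if j = 0 then σ₀ else σ₁)
      one_lt_two
    exact this.mono (le_of_eq (by ring))
  · exact (hσ₀' i hiT).mono (by omega)

/-- The exponent `e` of the largest number of the form `d * 2 ^ e` that is at most `x`. -/
noncomputable def roundExp (d x : ℝ) : ℕ :=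
  Nat.log 2 ⌊x / d⌋₊

theorem mul_two_pow_roundExp_le {d x : ℝ} (hd : 0 < d) (hx : d ≤ x) :
    d * 2 ^ roundExp d x ≤ x := by
  have hx' : 1 ≤ x / d := (one_le_div hd).2 hx
  have hfloor : ⌊x / d⌋₊ ≠ 0 := Nat.one_le_iff_ne_zero.1 ((Nat.one_le_floor_iff _).2 hx')
  have : ((2 ^ roundExp d x : ℕ) : ℝ) ≤ x / d :=
    (Nat.cast_le.2 (Nat.pow_log_le_self 2 hfloor)).trans (Nat.floor_le (by linarith))
  push_cast at this
  rwa [le_div_iff₀ hd, mul_comm] at this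

theorem lt_two_mul_mul_two_pow_roundExp {d x : ℝ} (hd : 0 < d) (hx : 0 ≤ x) :
    x < 2 * d * 2 ^ roundExp d x := by
  have := (Nat.floor_lt (div_nonneg hx hd.le)).1
    (Nat.lt_pow_succ_log_self one_lt_two ⌊x / d⌋₊)
  push_cast at this
  rw [div_lt_iff₀ hd, Nat.succ_eq_add_one, pow_succ] at this
  unfold roundExp
  linarith

theorem inv_two_pow_le_div {c x : ℝ} {e : ℕ} (hx : 0 < x) (h : x ≤ c * 2 ^ e) :
    ((2 : ℝ) ^ e)⁻¹ ≤ c / x := by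
  rw [le_div_iff₀ hx, inv_mul_le_iff₀ (by positivity)]
  linarith

theorem sum_inv_two_pow_roundExp_le [Fintype ι] [DecidableEq ι] {p : ι → ℝ} (hp : ∀ i, 0 < p i)
    {d : ℝ} (hd : 0 < d) (i₀ : ι) :
    ∑ i, ((2 : ℝ) ^ roundExp d (p i))⁻¹ ≤ 1 + 2 * d * (∑ i, 1 / p i - 1 / p i₀) := by
  rw [← Finset.add_sum_erase _ _ (Finset.mem_univ i₀),
    ← Finset.sum_erase_eq_sub (Finset.mem_univ i₀), Finset.mul_sum]
  gcongr with i
  · exact inv_le_one_of_one_le₀ (one_le_pow₀ one_le_two)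
  · rw [← mul_div_assoc, mul_one]
    exact inv_two_pow_le_div (hp i) (lt_two_mul_mul_two_pow_roundExp hd (hp i).le).le

theorem pinwheelFeasibleR_of_scheduledWithin {n : ℕ} {p : Fin n → ℝ} {σ : ℕ → Option (Fin n)}
    (h : ∀ i, ∃ W : ℕ, (W : ℝ) ≤ p i ∧ ScheduledWithin σ i W) : PinwheelFeasibleR p σ := fun i ↦ by
  obtain ⟨W, hW, hσ⟩ := h i
  exact hσ.mono (Nat.le_floor hW)

theorem exists_pinwheelFeasibleR_of_roundExp {n d : ℕ} {p : Fin n → ℝ} (hd : 0 < d)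
    (hp : ∀ i, (d : ℝ) ≤ p i) (hsum : ∑ i, ((2 : ℝ) ^ roundExp d (p i))⁻¹ ≤ d) :
    ∃ σ, PinwheelFeasibleR p σ := by
  obtain ⟨σ, hσ⟩ := exists_scheduledWithin_mul_two_pow d _ Finset.univ hsum
  refine ⟨σ, pinwheelFeasibleR_of_scheduledWithin fun i ↦ ⟨_, ?_, hσ i (Finset.mem_univ i)⟩⟩
  push_cast
  exact mul_two_pow_roundExp_le (Nat.cast_pos.2 hd) (hp i)

theorem exists_pinwheelFeasibleR_of_lt_three {n : ℕ} {p : Fin n → ℝ} (hp : ∀ i, 2 ≤ p i)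
    (hdens : ∑ i, 1 / p i ≤ 7 / 12) {i₀ : Fin n} (hi₀ : p i₀ < 3) :
    ∃ σ, PinwheelFeasibleR p σ := by
  refine exists_pinwheelFeasibleR_of_roundExp (d := 2) two_pos
    (by exact_mod_cast hp) ?_
  have hround := sum_inv_two_pow_roundExp_le (p := p) (fun i ↦ by linarith [hp i]) two_pos i₀
  have : 1 / 3 < 1 / p i₀ := one_div_lt_one_div_of_lt (by linarith [hp i₀]) hi₀
  push_cast
  linarith

theorem exists_pinwheelFeasibleR_of_lt_four {n : ℕ} {p : Fin n → ℝ} (hp : ∀ i, 3 ≤ p i)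
    (hdens : ∑ i, 1 / p i ≤ 7 / 12) {i₀ : Fin n} (hi₀ : p i₀ < 4) :
    ∃ σ, PinwheelFeasibleR p σ := by
  refine exists_pinwheelFeasibleR_of_roundExp (d := 3) three_pos
    (by exact_mod_cast hp) ?_
  have hround := sum_inv_two_pow_roundExp_le (p := p) (fun i ↦ by linarith [hp i]) three_pos i₀
  have : 1 / 4 < 1 / p i₀ := one_div_lt_one_div_of_lt (by linarith [hp i₀]) hi₀
  push_cast
  linarith

theorem exists_pinwheelFeasibleR_of_four_le {n : ℕ} {p : Fin n → ℝ} (hp : ∀ i, 4 ≤ p i)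
    (hdens : ∑ i, 1 / p i ≤ 7 / 12) : ∃ σ, PinwheelFeasibleR p σ := by
  have hp₀ : ∀ i, 0 < p i := fun i ↦ by linarith [hp i]
  set c := fun i ↦ roundExp 4 (p i)
  set B := Finset.univ.filter fun i ↦ 6 * (2 : ℝ) ^ c i ≤ p i
  have hBc : ∑ i ∈ Bᶜ, ((2 : ℝ) ^ c i)⁻¹ ≤ 6 * ∑ i ∈ Bᶜ, 1 / p i := by
    rw [Finset.mul_sum]
    refine Finset.sum_le_sum fun i hi ↦ ?_
    have : p i < 6 * 2 ^ c i := by simpa [B] using hi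
    rw [← mul_div_assoc, mul_one]
    exact inv_two_pow_le_div (hp₀ i) this.le
  have hB : ∑ i ∈ B, ((2 : ℝ) ^ c i)⁻¹ ≤ 8 * ∑ i ∈ B, 1 / p i := by
    rw [Finset.mul_sum]
    refine Finset.sum_le_sum fun i _ ↦ ?_
    rw [← mul_div_assoc, mul_one]
    have := lt_two_mul_mul_two_pow_roundExp four_pos (hp₀ i).le
    exact inv_two_pow_le_div (hp₀ i) (by linarith)
  have hsplit := Finset.sum_compl_add_sum B fun i ↦ ((2 : ℝ) ^ c i)⁻¹
  have hsplit' := Finset.sum_compl_add_sum B fun i ↦ 1 / p i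
  by_cases hBc2 : 2 < ∑ i ∈ Bᶜ, ((2 : ℝ) ^ c i)⁻¹
  · exact exists_pinwheelFeasibleR_of_roundExp (d := 4) four_pos (by exact_mod_cast hp)
      (by push_cast; linarith)
  have : 0 ≤ ∑ i ∈ Bᶜ, ((2 : ℝ) ^ c i)⁻¹ := by positivity
  obtain ⟨σ, hσB, hσBc⟩ := exists_scheduledWithin_mixed c B (by linarith) (by linarith)
  refine ⟨σ, pinwheelFeasibleR_of_scheduledWithin fun i ↦ ?_⟩
  by_cases hi : i ∈ B
  · exact ⟨_, by push_cast; simpa [B] using hi, hσB i hi⟩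
  · exact ⟨_, by push_cast; exact mul_two_pow_roundExp_le four_pos (hp i), hσBc i hi⟩

end Pinwheel

theorem pinwheel_of_density_le_seven_twelfths_general (n : ℕ) (p : Fin n → ℝ)
    (hp : ∀ i, 2 ≤ p i) (hd : ∑ i, 1 / p i ≤ 7 / 12) :
    ∃ σ : ℕ → Option (Fin n), PinwheelFeasibleR p σ := by
  by_cases h₃ : ∃ i, p i < 3
  · obtain ⟨i₀, hi₀⟩ := h₃
    exact Pinwheel.exists_pinwheelFeasibleR_of_lt_three hp hd hi₀
  by_cases h₄ : ∃ i, p i < 4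
  · obtain ⟨i₀, hi₀⟩ := h₄
    exact Pinwheel.exists_pinwheelFeasibleR_of_lt_four (fun i ↦ not_lt.1 fun h ↦ h₃ ⟨i, h⟩) hd hi₀
  exact Pinwheel.exists_pinwheelFeasibleR_of_four_le (fun i ↦ not_lt.1 fun h ↦ h₄ ⟨i, h⟩) hd

/-- Any pseudo-instance with all periods at least 2 and density at most 7/12
admits a feasible pinwheel schedule (Theorem 1, Chan–Chin rounding). -/
theorem pinwheel_of_density_le_seven_twelfths (n : ℕ) (hn : 1 ≤ n) (p : Fin n → ℝ)
    (hp : ∀ i, 2 ≤ p i) (hd : ∑ i, 1 / p i ≤ 7 / 12) :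
    ∃ σ : ℕ → Option (Fin n), PinwheelFeasibleR p σ :=
  pinwheel_of_density_le_seven_twelfths_general n p hp hd
end

section
/- Let h : Fin n → ℝ be growth rates with h i > 0 for all i, let H = ∑ i, h i, and assume h i ≤ 6H/7 for every i (equivalently, 12H/(7 h i) ≥ 2 for every i). Then there exists a trimming schedule that achieves value (12/7) · H, i.e., the height reached by every bamboo on every day is at most (12/7) · H. -/
/-!
Put `V = 12 H / 7` and `m i = ⌊V / h i⌋`. A schedule that cuts bamboo `i` within every `m i`
consecutive days keeps it below `h i * m i ≤ V`; here `2 ≤ m i` because `h i ≤ 6 H / 7`, and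
`∑ 1 / (m i + 1) < ∑ h i / V = 7 / 12`. Such pinwheel instances are schedulable. Windows `2 ^ e i`
with `∑ 2 ^ (-e i) ≤ 1` can always be scheduled. If some `m i = 2`, round every window down to a
power of two; if some `m i = 3`, give it every third day and round the other windows down to
`3 · 2 ^ k` on the remaining days; otherwise split the windows between the even days (rounded to
`2 · 2 ^ k`) and the odd days (rounded to `3 · 2 ^ k`, which carry dyadic density `3 / 2`).
-/

namespace Pinwheel

variable {ι : Type*}

open Finset

def VisitsWithin (σ : ℕ → Option ι) (i : ι) (m : ℕ) : Prop :=
  ∀ t, ∃ s, t ≤ s ∧ s < t + m ∧ σ s = some i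

def alternate (σ τ : ℕ → Option ι) (t : ℕ) : Option ι :=
  if t % 2 = 0 then σ (t / 2) else τ (t / 2)

/-- `σ` runs on the days divisible by `3`, `τ` on the remaining days, in order. -/
def oneInThree (σ τ : ℕ → Option ι) (t : ℕ) : Option ι :=
  if t % 3 = 0 then σ (t / 3) else τ (2 * t / 3)

namespace VisitsWithin

variable {σ τ : ℕ → Option ι} {i : ι} {m : ℕ}

theorem pos (h : VisitsWithin σ i m) : 0 < m := by
  obtain ⟨s, hs, hs', -⟩ := h 0
  omega

theorem mono (h : VisitsWithin σ i m) {m' : ℕ} (hm : m ≤ m') : VisitsWithin σ i m' := fun t =>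
  let ⟨s, hs, hs', hσ⟩ := h t
  ⟨s, hs, by omega, hσ⟩

theorem const (i : ι) : VisitsWithin (fun _ => some i) i 1 := fun t => ⟨t, le_rfl, by omega, rfl⟩

/-- `f` embeds a sub-timeline, `hfill` says that every `L` consecutive days contain `W`
consecutive days of it. -/
theorem of_comp {f : ℕ → ℕ} (hf : Monotone f) {W L : ℕ}
    (hfill : ∀ t, ∃ v, t ≤ f v ∧ f (v + W - 1) < t + L) (h : VisitsWithin (σ ∘ f) i W) :
    VisitsWithin σ i L := fun t => by
  obtain ⟨v, hv, hvW⟩ := hfill t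
  obtain ⟨s, hs, hsW, hσ⟩ := h v
  exact ⟨f s, hv.trans (hf hs), (hf (by omega)).trans_lt hvW, hσ⟩

theorem alternate_left (h : VisitsWithin σ i m) : VisitsWithin (alternate σ τ) i (2 * m) := by
  have hm := h.pos
  refine of_comp (f := fun v => 2 * v) (W := m) (fun a b hab => by dsimp only; omega)
    (fun t => ⟨(t + 1) / 2, by omega, by omega⟩) ?_
  convert h using 1
  funext v
  simp [alternate]

theorem alternate_right (h : VisitsWithin τ i m) : VisitsWithin (alternate σ τ) i (2 * m) := by
  have hm := h.pos
  refine of_comp (f := fun v => 2 * v + 1) (W := m) (fun a b hab => by dsimp only; omega)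
    (fun t => ⟨t / 2, by omega, by omega⟩) ?_
  convert h using 1
  funext v
  simp only [Function.comp, alternate]
  rw [if_neg (by omega), show (2 * v + 1) / 2 = v by omega]

theorem oneInThree_left (h : VisitsWithin σ i m) : VisitsWithin (oneInThree σ τ) i (3 * m) := by
  have hm := h.pos
  refine of_comp (f := fun v => 3 * v) (W := m) (fun a b hab => by dsimp only; omega)
    (fun t => ⟨(t + 2) / 3, by omega, by omega⟩) ?_
  convert h using 1
  funext v
  simp [oneInThree]

theorem oneInThree_right (h : VisitsWithin τ i m) :
    VisitsWithin (oneInThree σ τ) i ((3 * m + 1) / 2) := by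
  have hm := h.pos
  refine of_comp (f := fun v => 3 * (v / 2) + 1 + v % 2) (W := m)
    (monotone_nat_of_le_succ fun v => by omega)
    (fun t => ⟨2 * (t / 3) + t % 3 / 2, by omega, by omega⟩) ?_
  convert h using 1
  funext v
  simp only [Function.comp, oneInThree]
  rw [if_neg (by omega), show 2 * (3 * (v / 2) + 1 + v % 2) / 3 = v by omega]

end VisitsWithin

section Dyadic

variable (e : ι → ℕ)

theorem sum_inv_two_pow_pred (s : Finset ι) (h : ∀ i ∈ s, 1 ≤ e i) :
    ∑ i ∈ s, ((2 : ℝ) ^ (e i - 1))⁻¹ = 2 * ∑ i ∈ s, ((2 : ℝ) ^ e i)⁻¹ := by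
  rw [mul_sum]
  refine sum_congr rfl fun i hi => ?_
  obtain ⟨k, hk⟩ : ∃ k, e i = k + 1 := ⟨e i - 1, by have := h i hi; omega⟩
  rw [hk, Nat.add_sub_cancel, pow_succ]
  field_simp

variable [DecidableEq ι]

/-- Greedy filling in order of decreasing weight: the budget `c / 2 ^ g` is a multiple of every
weight, so it is either exhausted exactly or never reached. -/
theorem exists_subset_sum_inv_two_pow_le (s : Finset ι) {g c : ℕ} (hg : ∀ i ∈ s, g ≤ e i)
    {y : ℝ} (hy : 0 ≤ y) (hs : ∑ i ∈ s, ((2 : ℝ) ^ e i)⁻¹ ≤ c / 2 ^ g + y) :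
    ∃ t ⊆ s, ∑ i ∈ t, ((2 : ℝ) ^ e i)⁻¹ ≤ c / 2 ^ g ∧ ∑ i ∈ s \ t, ((2 : ℝ) ^ e i)⁻¹ ≤ y := by
  induction s using Finset.induction_on_min_value e generalizing g c with
  | empty => exact ⟨∅, subset_rfl, by rw [sum_empty]; positivity, by simpa using hy⟩
  | insert a s ha hmin ih =>
    rcases Nat.eq_zero_or_pos c with rfl | hc
    · exact ⟨∅, empty_subset _, by simp, by simpa using hs⟩
    have hga : g ≤ e a := hg a (mem_insert_self a s)
    have hsplit : (c : ℝ) / 2 ^ g = (2 ^ e a)⁻¹ + ((c * 2 ^ (e a - g) - 1 : ℕ) : ℝ) / 2 ^ e a := by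
      have h1 : 1 ≤ c * 2 ^ (e a - g) := Nat.one_le_iff_ne_zero.2 (by positivity)
      have h2 : (2 : ℝ) ^ e a = 2 ^ (e a - g) * 2 ^ g := by
        rw [← pow_add, Nat.sub_add_cancel hga]
      rw [Nat.cast_sub h1, h2]
      push_cast
      field_simp
      ring
    rw [sum_insert ha, hsplit, add_assoc] at hs
    obtain ⟨t, hts, ht, hst⟩ := ih hmin (add_le_add_iff_left _ |>.1 hs)
    refine ⟨insert a t, insert_subset_insert a hts, ?_, ?_⟩
    · rw [sum_insert fun h => ha (hts h), hsplit]
      linarith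
    · rwa [insert_sdiff_insert, sdiff_insert_of_notMem ha]

/-- Split the family into two parts of density at most `1 / 2`, schedule both recursively with
halved windows, and alternate them. -/
theorem exists_visitsWithin_two_pow (s : Finset ι) (hs : ∑ i ∈ s, ((2 : ℝ) ^ e i)⁻¹ ≤ 1) :
    ∃ σ : ℕ → Option ι, ∀ i ∈ s, VisitsWithin σ i (2 ^ e i) := by
  suffices ∀ E (e : ι → ℕ) (s : Finset ι), (∀ i ∈ s, e i < E) →
      ∑ i ∈ s, ((2 : ℝ) ^ e i)⁻¹ ≤ 1 → ∃ σ : ℕ → Option ι, ∀ i ∈ s, VisitsWithin σ i (2 ^ e i) from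
    this _ e s (fun i hi => Nat.lt_succ_of_le (le_sup hi)) hs
  intro E
  induction E with
  | zero => exact fun e s hE _ => ⟨fun _ => none, fun i hi => absurd (hE i hi) (Nat.not_lt_zero _)⟩
  | succ E ih =>
    intro e s hE hs
    have hnonneg : ∀ i ∈ s, (0 : ℝ) ≤ (2 ^ e i)⁻¹ := fun _ _ => by positivity
    by_cases h0 : ∃ i ∈ s, e i = 0
    · obtain ⟨i, hi, hei⟩ := h0
      refine ⟨fun _ => some i, fun j hj => ?_⟩
      obtain rfl : j = i := by
        by_contra hji
        have := add_le_sum hnonneg hi hj (Ne.symm hji)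
        rw [hei, pow_zero, inv_one] at this
        have : (0 : ℝ) < (2 ^ e j)⁻¹ := by positivity
        linarith
      exact (VisitsWithin.const j).mono Nat.one_le_two_pow
    push Not at h0
    have he : ∀ i ∈ s, 1 ≤ e i := fun i hi => Nat.one_le_iff_ne_zero.2 (h0 i hi)
    obtain ⟨t, hts, ht, hst⟩ := exists_subset_sum_inv_two_pow_le e s (g := 1) (c := 1) he
      (y := 1 / 2) (by norm_num) (by norm_num; linarith)
    have hE' : ∀ i ∈ s, e i - 1 < E := fun i hi => by have := hE i hi; have := he i hi; omega
    obtain ⟨σ₁, h₁⟩ := ih (fun i => e i - 1) t (fun i hi => hE' i (hts hi))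
      (by rw [sum_inv_two_pow_pred e t fun i hi => he i (hts hi)]; norm_num at ht; linarith)
    obtain ⟨σ₂, h₂⟩ := ih (fun i => e i - 1) (s \ t) (fun i hi => hE' i (sdiff_subset hi))
      (by rw [sum_inv_two_pow_pred e _ fun i hi => he i (sdiff_subset hi)]; linarith)
    refine ⟨alternate σ₁ σ₂, fun i hi => ?_⟩
    rw [← Nat.sub_add_cancel (he i hi), pow_succ, mul_comm]
    by_cases hit : i ∈ t
    · exact (h₁ i hit).alternate_left
    · exact (h₂ i (mem_sdiff.2 ⟨hi, hit⟩)).alternate_right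

/-- A part of density at most one runs on two days out of three; the rest, of density at most
`1 / 2` and hence without a window `1`, runs on every third day with halved windows. -/
theorem exists_visitsWithin_three_mul_two_pow (s : Finset ι)
    (hs : ∑ i ∈ s, ((2 : ℝ) ^ e i)⁻¹ ≤ 3 / 2) :
    ∃ σ : ℕ → Option ι, ∀ i ∈ s, VisitsWithin σ i ((3 * 2 ^ e i + 1) / 2) := by
  obtain ⟨t, hts, ht, hst⟩ := exists_subset_sum_inv_two_pow_le e s (g := 0) (c := 1)
    (fun _ _ => Nat.zero_le _) (y := 1 / 2) (by norm_num) (by norm_num; linarith)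
  have he : ∀ i ∈ s \ t, 1 ≤ e i := fun i hi => by
    by_contra! hei
    have := single_le_sum (fun j _ => by positivity) hi (f := fun j => ((2 : ℝ) ^ e j)⁻¹)
    simp only [Nat.lt_one_iff.1 hei, pow_zero, inv_one] at this
    linarith
  obtain ⟨σT, hT⟩ := exists_visitsWithin_two_pow e t (by simpa using ht)
  obtain ⟨σM, hM⟩ := exists_visitsWithin_two_pow (fun i => e i - 1) (s \ t)
    (by rw [sum_inv_two_pow_pred e _ he]; linarith)
  refine ⟨oneInThree σM σT, fun i hi => ?_⟩
  by_cases hit : i ∈ t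
  · exact (hT i hit).oneInThree_right
  · have hi' : i ∈ s \ t := mem_sdiff.2 ⟨hi, hit⟩
    refine (hM i hi').oneInThree_left.mono ?_
    obtain ⟨k, hk⟩ : ∃ k, e i = k + 1 := ⟨e i - 1, by have := he i hi'; omega⟩
    simp only [hk, Nat.add_sub_cancel, pow_succ]
    omega

end Dyadic

theorem succ_le_mul_two_pow_log_div (m : ℕ) {d : ℕ} (hd : 0 < d) :
    m + 1 ≤ 2 * d * 2 ^ Nat.log 2 (m / d) := by
  have h := Nat.lt_pow_succ_log_self one_lt_two (m / d)
  rw [pow_succ] at h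
  calc m + 1 ≤ d * (m / d + 1) := Nat.lt_mul_div_succ m hd
    _ ≤ d * (2 ^ Nat.log 2 (m / d) * 2) := Nat.mul_le_mul_left d h
    _ = 2 * d * 2 ^ Nat.log 2 (m / d) := by ring

theorem mul_two_pow_log_div_le {m d : ℕ} (hd : 0 < d) (hdm : d ≤ m) :
    d * 2 ^ Nat.log 2 (m / d) ≤ m :=
  (Nat.mul_le_mul_left d (Nat.pow_log_le_self 2 (Nat.div_pos hdm hd).ne')).trans
    (Nat.mul_div_le m d)

theorem inv_two_pow_le_mul_inv {m c k : ℕ} (h : m + 1 ≤ c * 2 ^ k) :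
    ((2 : ℝ) ^ k)⁻¹ ≤ c * ((m : ℝ) + 1)⁻¹ := by
  rw [← div_eq_mul_inv, le_div_iff₀ (by positivity), inv_mul_le_iff₀ (by positivity), mul_comm]
  exact_mod_cast h

theorem sum_inv_two_pow_le_mul (s : Finset ι) (m e : ι → ℕ) (c : ℕ)
    (h : ∀ i ∈ s, m i + 1 ≤ c * 2 ^ e i) :
    ∑ i ∈ s, ((2 : ℝ) ^ e i)⁻¹ ≤ c * ∑ i ∈ s, ((m i : ℝ) + 1)⁻¹ := by
  rw [mul_sum]
  exact sum_le_sum fun i hi => inv_two_pow_le_mul_inv (h i hi)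

theorem two_mul_three_mul_two_pow_log_div_three_le {m : ℕ} (hm : 4 ≤ m) :
    2 * ((3 * 2 ^ Nat.log 2 (m / 3) + 1) / 2) ≤ m := by
  have h := mul_two_pow_log_div_le (m := m) three_pos (by omega)
  rcases Nat.eq_zero_or_pos (Nat.log 2 (m / 3)) with h0 | h0
  · rw [h0]
    omega
  · rw [← Nat.sub_add_cancel h0, pow_succ] at h ⊢
    omega

theorem log_div_two_le_log_div_three_add_one (m : ℕ) :
    Nat.log 2 (m / 2) ≤ Nat.log 2 (m / 3) + 1 := by
  have := Nat.log_mono_right (b := 2) (show m / 2 / 2 ≤ m / 3 by omega)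
  rw [Nat.log_div_base] at this
  omega

/-- Where the two exponents differ, the odd-day weight `2 ^ (-eO)` is twice the even-day one
but `m + 1 ≤ 3 · 2 ^ eE`; where they agree, `m + 1 ≤ 4 · 2 ^ eO`. Together with the density
bound `7 / 12` this leaves room to move mass from either side to the other. -/
theorem exists_even_odd_split [DecidableEq ι] (s : Finset ι) (m eE eO : ι → ℕ)
    (hmE : ∀ i ∈ s, m i + 1 ≤ 4 * 2 ^ eE i) (hmO : ∀ i ∈ s, m i + 1 ≤ 6 * 2 ^ eO i)
    (hEO : ∀ i ∈ s, eO i ≤ eE i ∧ eE i ≤ eO i + 1) (hE : ∀ i ∈ s, 1 ≤ eE i)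
    (hd : ∑ i ∈ s, ((m i : ℝ) + 1)⁻¹ < 7 / 12) :
    ∃ sE sO, sE ∪ sO = s ∧ ∑ i ∈ sE, ((2 : ℝ) ^ eE i)⁻¹ ≤ 1 ∧
      ∑ i ∈ sO, ((2 : ℝ) ^ eO i)⁻¹ ≤ 3 / 2 := by
  set A := s.filter fun i => eO i < eE i
  set B := s.filter fun i => ¬eO i < eE i
  have hAB : A ∪ B = s := filter_union_filter_not_eq _ _
  have hdisj : Disjoint A B := disjoint_filter_filter_not _ _ _
  have hA : ∀ i ∈ A, eO i + 1 = eE i := fun i hi => by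
    obtain ⟨his, hi⟩ := mem_filter.1 hi
    have := hEO i his
    omega
  have hB : ∀ i ∈ B, eO i = eE i := fun i hi => by
    obtain ⟨his, hi⟩ := mem_filter.1 hi
    have := hEO i his
    omega
  have hAO : ∀ t ⊆ A, ∑ i ∈ t, ((2 : ℝ) ^ eO i)⁻¹ = 2 * ∑ i ∈ t, ((2 : ℝ) ^ eE i)⁻¹ :=
    fun t ht => by
      rw [← sum_inv_two_pow_pred eE t fun i hi => hE i (filter_subset _ _ (ht hi))]
      exact sum_congr rfl fun i hi => by rw [← hA i (ht hi), Nat.add_sub_cancel]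
  have hBO : ∀ t ⊆ B, ∑ i ∈ t, ((2 : ℝ) ^ eE i)⁻¹ = ∑ i ∈ t, ((2 : ℝ) ^ eO i)⁻¹ :=
    fun t ht => sum_congr rfl fun i hi => by rw [hB i (ht hi)]
  have hdAB : ∑ i ∈ A, ((m i : ℝ) + 1)⁻¹ + ∑ i ∈ B, ((m i : ℝ) + 1)⁻¹ < 7 / 12 := by
    rwa [← sum_union hdisj, hAB]
  have hdA : 0 ≤ ∑ i ∈ A, ((m i : ℝ) + 1)⁻¹ := sum_nonneg fun _ _ => by positivity
  have hdB : 0 ≤ ∑ i ∈ B, ((m i : ℝ) + 1)⁻¹ := sum_nonneg fun _ _ => by positivity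
  have ha := sum_inv_two_pow_le_mul A m eE 3 fun i hi => by
    have := hmO i (filter_subset _ _ hi)
    rw [← hA i hi, pow_succ]
    omega
  have hb := sum_inv_two_pow_le_mul B m eO 4 fun i hi => by
    rw [hB i hi]
    exact hmE i (filter_subset _ _ hi)
  by_cases hA1 : 1 < ∑ i ∈ A, ((2 : ℝ) ^ eE i)⁻¹
  · obtain ⟨A₁, hA₁, h₁, h₂⟩ := exists_subset_sum_inv_two_pow_le eE A (g := 0) (c := 1)
      (fun _ _ => Nat.zero_le _) (y := ∑ i ∈ A, ((2 : ℝ) ^ eE i)⁻¹ - 1) (by linarith)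
      (by norm_num)
    refine ⟨A₁, A \ A₁ ∪ B, by rw [← union_assoc, union_sdiff_of_subset hA₁, hAB],
      by simpa using h₁, ?_⟩
    rw [sum_union (disjoint_of_subset_left sdiff_subset hdisj), hAO _ sdiff_subset]
    push_cast at ha hb
    linarith
  by_cases hB1 : 3 / 2 < ∑ i ∈ B, ((2 : ℝ) ^ eO i)⁻¹
  · obtain ⟨B₁, hB₁, h₁, h₂⟩ := exists_subset_sum_inv_two_pow_le eO B (g := 1) (c := 3)
      (fun i hi => hB i hi ▸ hE i (filter_subset _ _ hi))
      (y := ∑ i ∈ B, ((2 : ℝ) ^ eO i)⁻¹ - 3 / 2) (by linarith) (by norm_num)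
    refine ⟨A ∪ B \ B₁, B₁, by rw [union_assoc, sdiff_union_of_subset hB₁, hAB], ?_,
      by norm_num at h₁; linarith⟩
    rw [sum_union (disjoint_of_subset_right sdiff_subset hdisj), hBO _ sdiff_subset]
    push_cast at ha hb
    linarith
  exact ⟨A, B, hAB, by linarith, by linarith⟩

section Cases

variable [DecidableEq ι] (s : Finset ι) (m : ι → ℕ)

theorem exists_visitsWithin_of_eq_two {x : ι} (hx : x ∈ s) (hmx : m x = 2)
    (hm : ∀ i ∈ s, m i ≠ 0) (hd : ∑ i ∈ s, ((m i : ℝ) + 1)⁻¹ < 7 / 12) :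
    ∃ σ : ℕ → Option ι, ∀ i ∈ s, VisitsWithin σ i (m i) := by
  have hrest := sum_inv_two_pow_le_mul (s.erase x) m (fun i => Nat.log 2 (m i)) 2
    fun i _ => by simpa using succ_le_mul_two_pow_log_div (m i) one_pos
  rw [← add_sum_erase s _ hx, hmx] at hd
  obtain ⟨σ, hσ⟩ := exists_visitsWithin_two_pow (fun i => Nat.log 2 (m i)) s (by
    rw [← add_sum_erase s _ hx, hmx]
    norm_num at hd hrest ⊢
    linarith)
  exact ⟨σ, fun i hi => (hσ i hi).mono (Nat.pow_log_le_self 2 (hm i hi))⟩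

theorem exists_visitsWithin_of_eq_three {x : ι} (hx : x ∈ s) (hmx : m x = 3)
    (hm : ∀ i ∈ s, 3 ≤ m i) (hd : ∑ i ∈ s, ((m i : ℝ) + 1)⁻¹ < 7 / 12) :
    ∃ σ : ℕ → Option ι, ∀ i ∈ s, VisitsWithin σ i (m i) := by
  have hrest := sum_inv_two_pow_le_mul (s.erase x) m (fun i => Nat.log 2 (m i / 3) + 1) 3
    fun i _ => by
      have := succ_le_mul_two_pow_log_div (m i) three_pos
      rw [pow_succ]
      omega
  rw [← add_sum_erase s _ hx, hmx] at hd
  obtain ⟨σ, hσ⟩ := exists_visitsWithin_two_pow (fun i => Nat.log 2 (m i / 3) + 1) (s.erase x)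
    (by norm_num at hd hrest ⊢; linarith)
  refine ⟨oneInThree (fun _ => some x) σ, fun i hi => ?_⟩
  rcases eq_or_ne i x with rfl | hix
  · exact (VisitsWithin.const i).oneInThree_left.mono hmx.ge
  · refine (hσ i (mem_erase.2 ⟨hix, hi⟩)).oneInThree_right.mono ?_
    have := mul_two_pow_log_div_le three_pos (hm i hi)
    rw [pow_succ]
    omega

theorem exists_visitsWithin_of_even_odd (sE sO : Finset ι) (hsE : ∀ i ∈ sE, 2 ≤ m i)
    (hsO : ∀ i ∈ sO, 4 ≤ m i) (hE : ∑ i ∈ sE, ((2 : ℝ) ^ Nat.log 2 (m i / 2))⁻¹ ≤ 1)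
    (hO : ∑ i ∈ sO, ((2 : ℝ) ^ Nat.log 2 (m i / 3))⁻¹ ≤ 3 / 2) :
    ∃ σ : ℕ → Option ι, ∀ i ∈ sE ∪ sO, VisitsWithin σ i (m i) := by
  obtain ⟨σE, hσE⟩ := exists_visitsWithin_two_pow _ sE hE
  obtain ⟨σO, hσO⟩ := exists_visitsWithin_three_mul_two_pow _ sO hO
  refine ⟨alternate σE σO, fun i hi => ?_⟩
  rcases mem_union.1 hi with hi | hi
  · exact (hσE i hi).alternate_left.mono (mul_two_pow_log_div_le two_pos (hsE i hi))
  · exact (hσO i hi).alternate_right.mono (two_mul_three_mul_two_pow_log_div_three_le (hsO i hi))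

theorem exists_visitsWithin_of_four_le (hm : ∀ i ∈ s, 4 ≤ m i)
    (hd : ∑ i ∈ s, ((m i : ℝ) + 1)⁻¹ < 7 / 12) :
    ∃ σ : ℕ → Option ι, ∀ i ∈ s, VisitsWithin σ i (m i) := by
  obtain ⟨sE, sO, rfl, hE, hO⟩ := exists_even_odd_split s m
    (fun i => Nat.log 2 (m i / 2)) (fun i => Nat.log 2 (m i / 3))
    (fun i _ => succ_le_mul_two_pow_log_div (m i) two_pos)
    (fun i _ => succ_le_mul_two_pow_log_div (m i) three_pos)
    (fun i _ => ⟨Nat.log_mono_right (by omega), log_div_two_le_log_div_three_add_one (m i)⟩)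
    (fun i hi => Nat.log_pos one_lt_two (by have := hm i hi; omega)) hd
  exact exists_visitsWithin_of_even_odd m sE sO
    (fun i hi => by have := hm i (mem_union_left _ hi); omega)
    (fun i hi => hm i (mem_union_right _ hi)) hE hO

theorem exists_visitsWithin_of_sum_inv_lt (hm : ∀ i ∈ s, 2 ≤ m i)
    (hd : ∑ i ∈ s, ((m i : ℝ) + 1)⁻¹ < 7 / 12) :
    ∃ σ : ℕ → Option ι, ∀ i ∈ s, VisitsWithin σ i (m i) := by
  by_cases h2 : ∃ x ∈ s, m x = 2
  · obtain ⟨x, hx, hmx⟩ := h2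
    exact exists_visitsWithin_of_eq_two s m hx hmx (fun i hi => by have := hm i hi; omega) hd
  push Not at h2
  by_cases h3 : ∃ x ∈ s, m x = 3
  · obtain ⟨x, hx, hmx⟩ := h3
    exact exists_visitsWithin_of_eq_three s m hx hmx
      (fun i hi => by have := hm i hi; have := h2 i hi; omega) hd
  push Not at h3
  exact exists_visitsWithin_of_four_le s m
    (fun i hi => by have := hm i hi; have := h2 i hi; have := h3 i hi; omega) hd

end Cases

end Pinwheel

theorem exists_pinwheelFeasibleN {n : ℕ} (p : Fin n → ℕ) (hp : ∀ i, 2 ≤ p i)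
    (hd : ∑ i, ((p i : ℝ) + 1)⁻¹ < 7 / 12) : ∃ σ, PinwheelFeasibleN p σ := by
  obtain ⟨σ, hσ⟩ := Pinwheel.exists_visitsWithin_of_sum_inv_lt Finset.univ p (fun i _ => hp i) hd
  exact ⟨σ, fun i => hσ i (Finset.mem_univ i)⟩

theorem bambooHeight_le_mul {n : ℕ} {h : Fin n → ℝ} {p : Fin n → ℕ} {σ : ℕ → Option (Fin n)}
    (hσ : PinwheelFeasibleN p σ) {i : Fin n} (hi : 0 ≤ h i) (t : ℕ) :
    bambooHeight h σ i t ≤ h i * p i := by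
  have hcut : t + 1 ≤ lastCutPlusOne σ i t + p i := by
    rcases lt_or_ge t (p i) with ht | ht
    · omega
    obtain ⟨s, hts, hst, hσs⟩ := hσ i (t - p i)
    have : s + 1 ≤ lastCutPlusOne σ i t :=
      Nat.le_findGreatest (by omega) ⟨s.succ_pos, by simpa using hσs⟩
    omega
  have : ((t : ℝ) + 1) ≤ lastCutPlusOne σ i t + p i := by exact_mod_cast hcut
  unfold bambooHeight
  gcongr
  linarith

theorem sum_inv_floor_mul_sum_div_add_one_lt {ι : Type*} [Fintype ι] (h : ι → ℝ)
    (hpos : ∀ i, 0 < h i) {c : ℝ} (hc : 0 < c) :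
    ∑ i, ((⌊c * (∑ j, h j) / h i⌋₊ : ℝ) + 1)⁻¹ < c⁻¹ := by
  rcases isEmpty_or_nonempty ι with hι | hι
  · simpa using hc
  have hH : 0 < ∑ j, h j := Finset.sum_pos (fun i _ => hpos i) Finset.univ_nonempty
  calc ∑ i, ((⌊c * (∑ j, h j) / h i⌋₊ : ℝ) + 1)⁻¹ < ∑ i, h i / (c * ∑ j, h j) :=
        Finset.sum_lt_sum_of_nonempty Finset.univ_nonempty fun i _ => by
          rw [← inv_div (c * ∑ j, h j)]
          exact inv_strictAnti₀ (div_pos (mul_pos hc hH) (hpos i)) (Nat.lt_floor_add_one _)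
    _ = c⁻¹ := by
      rw [← Finset.sum_div]
      field_simp

/-- If every growth rate is at most 6H/7, there is a trimming schedule
of value (12/7)·H, where H is the sum of the growth rates. -/
theorem bgt_twelve_sevenths (n : ℕ) (h : Fin n → ℝ) (hpos : ∀ i, 0 < h i)
    (hle : ∀ i, h i ≤ 6 * (∑ j, h j) / 7) :
    ∃ σ : ℕ → Option (Fin n), TrimmingAchieves h σ ((12 / 7) * ∑ j, h j) := by
  obtain ⟨σ, hσ⟩ := exists_pinwheelFeasibleN (fun i => ⌊12 / 7 * (∑ j, h j) / h i⌋₊)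
    (fun i => Nat.le_floor <| by
      rw [le_div_iff₀ (hpos i)]
      push_cast
      linarith [hle i])
    ((sum_inv_floor_mul_sum_div_add_one_lt h hpos (by norm_num)).trans_eq (by norm_num))
  refine ⟨σ, fun i t => (bambooHeight_le_mul hσ (hpos i).le t).trans ?_⟩
  have hH : 0 ≤ ∑ j, h j := Finset.sum_nonneg fun j _ => (hpos j).le
  rw [mul_comm, ← le_div_iff₀ (hpos i)]
  exact Nat.floor_le (div_nonneg (by positivity) (hpos i).le)
end

section
/- Let h : Fin n → ℝ be growth rates with h i > 0 for all i and let H = ∑ i, h i. Then there exists a trimming schedule that achieves value 2H, i.e., the height reached by every bamboo on every day is at most 2H. -/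
/-!
Give bamboo `i` the pinwheel period `p i = 2H / h i`; these periods have density
`∑ 1 / p i = 1/2`, and cutting `i` at least once in every `⌊p i⌋` consecutive days keeps it
below `h i * p i = 2H`. Rounding each period down to a power of two `2 ^ e i` at most doubles
the density, so `∑ 2 ^ (-e i) ≤ 1`. Such an instance is scheduled by disjoint residue classes
`a i mod 2 ^ e i`, chosen in order of increasing period: the classes already placed have
periods dividing the current one and density less than one, so they miss some residue modulo it.
-/

open Finset

theorem Nat.exists_modEq_between {q : ℕ} (hq : 0 < q) (a t : ℕ) :
    ∃ s, t ≤ s ∧ s < t + q ∧ s ≡ a [MOD q] := by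
  refine ⟨t + (a + (q - t % q)) % q, Nat.le_add_right _ _,
    by have := Nat.mod_lt (a + (q - t % q)) hq; omega, ?_⟩
  calc t + (a + (q - t % q)) % q ≡ t + (a + (q - t % q)) [MOD q] :=
        (Nat.mod_modEq _ _).add_left t
    _ = a + q * (t / q + 1) := by
        have := Nat.div_add_mod t q; have := Nat.mod_lt t hq; rw [mul_add]; omega
    _ ≡ a [MOD q] := Nat.add_mul_mod_self_left a q _

section Offsets

variable {ι : Type*}

theorem exists_forall_not_modEq_of_sum_inv_lt_one {s : Finset ι} {q : ι → ℕ} {M : ℕ}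
    (hM : 0 < M) (hq : ∀ j ∈ s, q j ∣ M) (hs : ∑ j ∈ s, ((q j : ℝ))⁻¹ < 1) (a : ι → ℕ) :
    ∃ r, ∀ j ∈ s, ¬ r ≡ a j [MOD q j] := by
  classical
  by_contra! hcover
  have hq0 : ∀ j ∈ s, 0 < q j := fun j hj => Nat.pos_of_dvd_of_pos (hq j hj) hM
  have hcount : M ≤ ∑ j ∈ s, M / q j := calc
    M = #(range M) := (card_range M).symm
    _ ≤ #(s.biUnion fun j => {r ∈ range M | r ≡ a j [MOD q j]}) := card_le_card fun r hr => by
        obtain ⟨j, hj, hrj⟩ := hcover r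
        exact mem_biUnion.2 ⟨j, hj, mem_filter.2 ⟨hr, hrj⟩⟩
    _ ≤ ∑ j ∈ s, #{r ∈ range M | r ≡ a j [MOD q j]} := card_biUnion_le
    _ = ∑ j ∈ s, M / q j := sum_congr rfl fun j hj => by
        rw [← Nat.count_eq_card_filter_range, Nat.count_modEq_card _ (hq0 j hj),
          Nat.mod_eq_zero_of_dvd (hq j hj)]
        simp
  have hcast : ((∑ j ∈ s, M / q j : ℕ) : ℝ) = M * ∑ j ∈ s, ((q j : ℝ))⁻¹ := by
    rw [Nat.cast_sum, mul_sum]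
    exact sum_congr rfl fun j hj => by
      rw [Nat.cast_div (hq j hj) (by exact_mod_cast (hq0 j hj).ne'), div_eq_mul_inv]
  have hcount' : (M : ℝ) ≤ M * ∑ j ∈ s, ((q j : ℝ))⁻¹ := by
    rw [← hcast]; exact_mod_cast hcount
  exact hcount'.not_gt (mul_lt_of_lt_one_right (by exact_mod_cast hM) hs)

theorem exists_two_pow_offsets_pairwiseDisjoint [DecidableEq ι] (e : ι → ℕ) (s : Finset ι)
    (hs : ∑ i ∈ s, ((2 : ℝ) ^ e i)⁻¹ ≤ 1) :
    ∃ a : ι → ℕ, (s : Set ι).PairwiseDisjoint fun i => {t | t ≡ a i [MOD 2 ^ e i]} := by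
  induction s using Finset.induction_on_max_value e with
  | empty => exact ⟨0, by simp⟩
  | insert i s hi hmax ih =>
    rw [sum_insert hi] at hs
    have hi_pos : 0 < ((2 : ℝ) ^ e i)⁻¹ := by positivity
    obtain ⟨a, ha⟩ := ih (by linarith)
    obtain ⟨r, hr⟩ := exists_forall_not_modEq_of_sum_inv_lt_one (pow_pos two_pos (e i))
      (fun j hj => pow_dvd_pow 2 (hmax j hj)) (by push_cast; linarith) a
    refine ⟨Function.update a i r, ?_⟩
    rw [coe_insert]
    refine (ha.mono_on fun j hj => ?_).insert fun j hj _ => Set.disjoint_left.2 fun t hti htj => ?_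
    · rw [Function.update_of_ne (ne_of_mem_of_not_mem hj hi)]
    · simp only [Set.mem_ofPred_eq, Function.update_self,
        Function.update_of_ne (ne_of_mem_of_not_mem hj hi)] at hti htj
      exact hr j hj ((hti.of_dvd (pow_dvd_pow 2 (hmax j hj))).symm.trans htj)

end Offsets

theorem exists_pinwheelFeasibleN_of_pairwiseDisjoint {n : ℕ} {q a : Fin n → ℕ}
    (hq : ∀ i, 0 < q i)
    (hd : (Set.univ : Set (Fin n)).PairwiseDisjoint fun i => {t | t ≡ a i [MOD q i]}) :
    ∃ σ, PinwheelFeasibleN q σ := by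
  classical
  let σ : ℕ → Option (Fin n) := fun t =>
    if h : ∃ i, t ≡ a i [MOD q i] then some h.choose else none
  have hσ : ∀ i t, t ≡ a i [MOD q i] → σ t = some i := fun i t ht => by
    have h : ∃ i, t ≡ a i [MOD q i] := ⟨i, ht⟩
    simp only [σ, dif_pos h, Option.some.injEq]
    by_contra hne
    exact Set.disjoint_left.1 (hd (Set.mem_univ _) (Set.mem_univ _) hne) h.choose_spec ht
  refine ⟨σ, fun i t => ?_⟩
  obtain ⟨s, hts, hst, hs⟩ := Nat.exists_modEq_between (hq i) (a i) t
  exact ⟨s, hts, hst, hσ i s hs⟩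

theorem exists_pinwheelFeasibleN_two_pow {n : ℕ} (e : Fin n → ℕ)
    (he : ∑ i, ((2 : ℝ) ^ e i)⁻¹ ≤ 1) : ∃ σ, PinwheelFeasibleN (fun i => 2 ^ e i) σ := by
  obtain ⟨a, ha⟩ := exists_two_pow_offsets_pairwiseDisjoint e univ he
  rw [coe_univ] at ha
  exact exists_pinwheelFeasibleN_of_pairwiseDisjoint (fun i => pow_pos two_pos _) ha

theorem PinwheelFeasibleN.mono {n : ℕ} {p p' : Fin n → ℕ} {σ : ℕ → Option (Fin n)}
    (hσ : PinwheelFeasibleN p σ) (hp : ∀ i, p i ≤ p' i) : PinwheelFeasibleN p' σ := fun i t => by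
  obtain ⟨s, hts, hst, hs⟩ := hσ i t
  exact ⟨s, hts, hst.trans_le (Nat.add_le_add_left (hp i) t), hs⟩

theorem exists_pinwheelFeasibleR_of_sum_inv_le_half {n : ℕ} (p : Fin n → ℝ) (hp : ∀ i, 0 < p i)
    (hd : ∑ i, (p i)⁻¹ ≤ 1 / 2) : ∃ σ, PinwheelFeasibleR p σ := by
  have hp_two : ∀ i, 2 ≤ p i := fun i => by
    have := (single_le_sum (fun j _ => (inv_pos.2 (hp j)).le) (mem_univ i)).trans hd
    rwa [inv_le_comm₀ (hp i) (by norm_num), one_div, inv_inv] at this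
  choose e he_le he_lt using fun i => exists_nat_pow_near (by linarith [hp_two i] : 1 ≤ p i)
    one_lt_two
  have hdensity : ∑ i, ((2 : ℝ) ^ e i)⁻¹ ≤ 1 := calc
    ∑ i, ((2 : ℝ) ^ e i)⁻¹ ≤ ∑ i, 2 * (p i)⁻¹ := sum_le_sum fun i _ => by
        rw [← div_eq_mul_inv, le_div_iff₀ (hp i), ← div_eq_inv_mul,
          div_le_iff₀ (by positivity), ← pow_succ']
        exact (he_lt i).le
    _ ≤ 1 := by rw [← mul_sum]; linarith
  obtain ⟨σ, hσ⟩ := exists_pinwheelFeasibleN_two_pow e hdensity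
  exact ⟨σ, hσ.mono fun i => Nat.le_floor (by exact_mod_cast he_le i)⟩

theorem lastCutPlusOne_add_le {n : ℕ} {σ : ℕ → Option (Fin n)} {i : Fin n} {P : ℕ}
    (hP : ∀ t, ∃ s, t ≤ s ∧ s < t + P ∧ σ s = some i) (t : ℕ) :
    t + 1 ≤ lastCutPlusOne σ i t + P := by
  rcases lt_or_ge t P with htP | hPt
  · omega
  · obtain ⟨s, hts, hst, hs⟩ := hP (t - P)
    have : s + 1 ≤ lastCutPlusOne σ i t :=
      Nat.le_findGreatest (by omega) ⟨Nat.succ_pos s, by simpa using hs⟩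
    omega

theorem PinwheelFeasibleR.trimmingAchieves {n : ℕ} {h : Fin n → ℝ} {σ : ℕ → Option (Fin n)}
    {V : ℝ} (hσ : PinwheelFeasibleR (fun i => V / h i) σ) (hh : ∀ i, 0 < h i) :
    TrimmingAchieves h σ V := fun i t => by
  have hgap : (t + 1 : ℝ) - lastCutPlusOne σ i t ≤ ⌊V / h i⌋₊ := by
    have := lastCutPlusOne_add_le (hσ i) t
    rw [sub_le_iff_le_add']
    exact_mod_cast this
  have hV : 0 < V / h i := Nat.pos_of_floor_pos <| by
    obtain ⟨s, -, hsP, -⟩ := hσ i 0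
    exact (Nat.zero_le s).trans_lt (hsP.trans_eq (zero_add _))
  calc bambooHeight h σ i t = h i * ((t + 1 : ℝ) - lastCutPlusOne σ i t) := rfl
    _ ≤ h i * (V / h i) := by
        gcongr
        · exact (hh i).le
        · exact hgap.trans (Nat.floor_le hV.le)
    _ = V := mul_div_cancel₀ V (hh i).ne'

/-- There always is a trimming schedule of value 2H,
where H is the sum of the growth rates (Gasieniec et al.). -/
theorem bgt_two_approx (n : ℕ) (h : Fin n → ℝ) (hpos : ∀ i, 0 < h i) :
    ∃ σ : ℕ → Option (Fin n), TrimmingAchieves h σ (2 * ∑ j, h j) := by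
  set H := ∑ j, h j
  have hH_pos : ∀ i, 0 < H := fun i =>
    (hpos i).trans_le (single_le_sum (fun j _ => (hpos j).le) (mem_univ i))
  have hdensity : ∑ i, (2 * H / h i)⁻¹ ≤ 1 / 2 := calc
    ∑ i, (2 * H / h i)⁻¹ = 1 / 2 * (H / H) := by
        simp_rw [inv_div, ← sum_div, H]; ring
    _ ≤ 1 / 2 := by linarith [div_self_le_one H]
  obtain ⟨σ, hσ⟩ := exists_pinwheelFeasibleR_of_sum_inv_le_half (fun i => 2 * H / h i)
    (fun i => div_pos (by linarith [hH_pos i]) (hpos i)) hdensity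
  exact ⟨σ, hσ.trimmingAchieves hpos⟩
end

section
/- Let p : Fin n → ℕ be integer periods with p i ≥ 1 for all i, such that for all i, j, if p i ≤ p j then p i divides p j, and such that ∑ i, 1 / (p i : ℝ) ≤ 1. Then there exists a feasible pinwheel schedule for p. -/
/-! Job `i` is run exactly on the days of a residue class `o i` modulo `p i`, so it suffices to
choose these classes pairwise disjoint. Jobs are added in increasing order of period: when job `a`
comes, every earlier period divides `p a`, so the earlier classes cover only
`∑ p a / p x < p a` residues modulo `p a` (this is the density bound), and a free one remains. -/

open Finset Function

section

variable {ι : Type*}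

theorem Nat.exists_le_lt_add_modEq (t v : ℕ) {m : ℕ} (hm : 0 < m) :
    ∃ s, t ≤ s ∧ s < t + m ∧ s ≡ v [MOD m] := by
  have ht : t % m < m := Nat.mod_lt t hm
  refine ⟨t + (v + m - t % m) % m, Nat.le_add_right t _,
    Nat.add_lt_add_left (Nat.mod_lt _ hm) t, ?_⟩
  calc (t + (v + m - t % m) % m) % m = (t % m + (v + m - t % m)) % m := by
        rw [Nat.add_mod_mod, Nat.mod_add_mod]
    _ = (v + m) % m := by congr 1; omega
    _ = v % m := Nat.add_mod_right v m

theorem Nat.card_filter_range_modEq_of_dvd {m d : ℕ} (v : ℕ) (hd : 0 < d) (hdm : d ∣ m) :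
    #{r ∈ range m | r ≡ v [MOD d]} = m / d := by
  rw [← Nat.count_eq_card_filter_range, Nat.count_modEq_card _ hd, Nat.mod_eq_zero_of_dvd hdm]
  simp

theorem sum_div_lt_of_sum_one_div_le_one [DecidableEq ι] {s : Finset ι} {p : ι → ℕ} {k : ι}
    (hk : k ∈ s) (hp : ∀ i ∈ s, 0 < p i) (hdvd : ∀ i ∈ s, p i ∣ p k)
    (hd : ∑ i ∈ s, 1 / (p i : ℝ) ≤ 1) :
    ∑ i ∈ s.erase k, p k / p i < p k := by
  have hk0 : (0 : ℝ) < p k := by exact_mod_cast hp k hk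
  have hcast :
      ((∑ i ∈ s.erase k, p k / p i : ℕ) : ℝ) = p k * ∑ i ∈ s.erase k, 1 / (p i : ℝ) := by
    rw [Nat.cast_sum, Finset.mul_sum]
    refine Finset.sum_congr rfl fun i hi => ?_
    have hi := Finset.mem_of_mem_erase hi
    rw [Nat.cast_div (hdvd i hi) (by exact_mod_cast (hp i hi).ne'), mul_one_div]
  have hrest : ∑ i ∈ s.erase k, 1 / (p i : ℝ) ≤ 1 - 1 / p k := by
    linarith [Finset.sum_erase_add s (fun i => 1 / (p i : ℝ)) hk]
  have : ((∑ i ∈ s.erase k, p k / p i : ℕ) : ℝ) < p k := by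
    calc ((∑ i ∈ s.erase k, p k / p i : ℕ) : ℝ)
        ≤ p k * (1 - 1 / p k) := hcast ▸ mul_le_mul_of_nonneg_left hrest hk0.le
      _ = p k - 1 := by field_simp
      _ < p k := sub_one_lt _
  exact_mod_cast this

theorem exists_lt_not_modEq_of_sum_div_lt {s : Finset ι} {p : ι → ℕ} (o : ι → ℕ) {m : ℕ}
    (hp : ∀ x ∈ s, 0 < p x) (hdvd : ∀ x ∈ s, p x ∣ m) (hsum : ∑ x ∈ s, m / p x < m) :
    ∃ r < m, ∀ x ∈ s, ¬ r ≡ o x [MOD p x] := by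
  classical
  set blocked := s.biUnion fun x => {r ∈ range m | r ≡ o x [MOD p x]}
  have hcard : #blocked < #(range m) := by
    calc #blocked ≤ ∑ x ∈ s, #{r ∈ range m | r ≡ o x [MOD p x]} := card_biUnion_le
      _ = ∑ x ∈ s, m / p x := sum_congr rfl fun x hx =>
          Nat.card_filter_range_modEq_of_dvd _ (hp x hx) (hdvd x hx)
      _ < #(range m) := by rwa [card_range]
  obtain ⟨r, hr, hrb⟩ := exists_mem_notMem_of_card_lt_card hcard
  refine ⟨r, mem_range.mp hr, fun x hx hrx => hrb ?_⟩
  exact mem_biUnion.mpr ⟨x, hx, mem_filter.mpr ⟨hr, hrx⟩⟩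

theorem exists_pairwiseDisjoint_modEq (s : Finset ι) (p : ι → ℕ) (hp : ∀ i ∈ s, 0 < p i)
    (hdvd : ∀ i ∈ s, ∀ j ∈ s, p i ≤ p j → p i ∣ p j) (hd : ∑ i ∈ s, 1 / (p i : ℝ) ≤ 1) :
    ∃ o : ι → ℕ, (s : Set ι).PairwiseDisjoint fun i => {t | t ≡ o i [MOD p i]} := by
  classical
  induction s using Finset.induction_on_max_value p with
  | empty => exact ⟨0, by simp⟩
  | insert a s ha hmax ih =>
    have hsub : s ⊆ insert a s := subset_insert a s
    obtain ⟨o, ho⟩ := ih (fun i hi => hp i (hsub hi))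
      (fun i hi j hj => hdvd i (hsub hi) j (hsub hj))
      (le_trans (sum_le_sum_of_subset_of_nonneg hsub fun _ _ _ => by positivity) hd)
    have hdvda : ∀ x ∈ insert a s, p x ∣ p a := fun x hx =>
      hdvd x hx a (mem_insert_self a s) ((mem_insert.mp hx).elim (fun h => h ▸ le_rfl) (hmax x))
    have hsum := sum_div_lt_of_sum_one_div_le_one (mem_insert_self a s) hp hdvda hd
    rw [erase_insert ha] at hsum
    obtain ⟨r, -, hr⟩ := exists_lt_not_modEq_of_sum_div_lt o (fun x hx => hp x (hsub hx))
      (fun x hx => hdvda x (hsub hx)) hsum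
    have hupd : ∀ x ∈ s, update o a r x = o x := fun x hx =>
      update_of_ne (ne_of_mem_of_not_mem hx ha) r o
    refine ⟨update o a r, ?_⟩
    rw [coe_insert]
    refine Set.PairwiseDisjoint.insert_of_notMem ?_ ha fun x hx => ?_
    · intro i hi j hj hij
      simpa only [onFun, hupd i hi, hupd j hj] using ho hi hj hij
    · refine Set.disjoint_left.mpr fun t hta htx => hr x hx ?_
      simp only [Set.mem_ofPred_eq, update_self, hupd x hx] at hta htx
      exact (hta.of_dvd (hdvda x (hsub hx))).symm.trans htx

open Classical in
noncomputable def scheduleOfDisjoint (A : ι → Set ℕ) (t : ℕ) : Option ι :=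
  if h : ∃ i, t ∈ A i then some h.choose else none

theorem scheduleOfDisjoint_eq_some {A : ι → Set ℕ} (hA : Pairwise (Disjoint on A))
    {t : ℕ} {i : ι} (ht : t ∈ A i) : scheduleOfDisjoint A t = some i := by
  have h : ∃ j, t ∈ A j := ⟨i, ht⟩
  rw [scheduleOfDisjoint, dif_pos h]
  exact congrArg some (of_not_not fun hne => Set.disjoint_left.mp (hA hne) h.choose_spec ht)

end

/-- An integer instance forming a divisibility chain with density at most 1
admits a feasible pinwheel schedule (Holte et al.). -/
theorem pinwheel_of_divisibility_chain (n : ℕ) (p : Fin n → ℕ) (hp : ∀ i, 1 ≤ p i)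
    (hdvd : ∀ i j, p i ≤ p j → p i ∣ p j) (hd : ∑ i, 1 / (p i : ℝ) ≤ 1) :
    ∃ σ : ℕ → Option (Fin n), PinwheelFeasibleN p σ := by
  obtain ⟨o, ho⟩ := exists_pairwiseDisjoint_modEq univ p (fun i _ => hp i)
    (fun i _ j _ => hdvd i j) hd
  rw [coe_univ] at ho
  refine ⟨scheduleOfDisjoint fun i => {t | t ≡ o i [MOD p i]}, fun i t => ?_⟩
  obtain ⟨s, hts, hst, hs⟩ := Nat.exists_le_lt_add_modEq t (o i) (hp i)
  exact ⟨s, hts, hst, scheduleOfDisjoint_eq_some (Set.pairwise_univ.mp ho) hs⟩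
end

section
/- Let p : Fin n → ℕ be integer periods with p i ≥ 1 for all i, such that for all i, j, if p i ≤ p j then p i divides p j, and such that ∑ i, 1 / (p i : ℝ) ≤ 1. Then there exist offsets o : Fin n → ℕ with o i < p i for all i, such that for all i ≠ j there is no day t ∈ ℕ with t ≡ o i (mod p i) and t ≡ o j (mod p j). Consequently, the periodic schedule that schedules job i exactly on the days congruent to o i modulo p i assigns at most one job per day and is a feasible pinwheel schedule for p. -/
/-!
Add the jobs in order of increasing period. When a job of period `P` is added, every job `j`
already placed has `p j ∣ P`, so its residue class mod `p j` covers at most `P / p j` residues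
mod `P`; density at most `1` bounds these by `∑ P / p j ≤ P - 1`, leaving a free residue `c`
mod `P`. Its class misses every earlier class, since `t ≡ c (mod P)` fixes `t % p j = c % p j`.
-/

open Finset

theorem Nat.exists_le_lt_add_mod_eq {P r : ℕ} (hr : r < P) (t : ℕ) :
    ∃ s, t ≤ s ∧ s < t + P ∧ s % P = r := by
  have hP : 0 < P := by omega
  refine ⟨t + (P + r - t % P) % P, by omega, by have := Nat.mod_lt (P + r - t % P) hP; omega, ?_⟩
  have hsplit : t + (P + r - t % P) = r + P * (t / P + 1) := by
    have := Nat.div_add_mod t P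
    have := Nat.mod_lt t hP
    rw [Nat.mul_add, Nat.mul_one]
    omega
  rw [Nat.add_mod_mod, hsplit, Nat.add_mul_mod_self_left, Nat.mod_eq_of_lt hr]

theorem Nat.card_filter_range_mod_eq_le {d P : ℕ} (hd : d ∣ P) (r : ℕ) :
    #{c ∈ range P | c % d = r} ≤ P / d := by
  rcases Nat.eq_zero_or_pos d with rfl | hd0
  · simp [Nat.eq_zero_of_zero_dvd hd]
  obtain ⟨k, rfl⟩ := hd
  rw [Nat.mul_div_cancel_left k hd0]
  refine (card_range k).le.trans' <|
    card_le_card_of_injOn (· / d) (fun c hc => ?_) (fun a ha b hb hab => ?_)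
  · simp only [coe_filter, mem_range, Set.mem_ofPred_eq, coe_range, Set.mem_Iio] at hc ⊢
    exact Nat.div_lt_of_lt_mul hc.1
  · simp only [coe_filter, mem_range, Set.mem_ofPred_eq] at ha hb
    rw [← Nat.div_add_mod a d, ← Nat.div_add_mod b d, ha.2, hb.2]
    exact congrArg (d * · + r) hab

theorem exists_option_eq_some_iff_of_pairwise_disjoint {α ι : Type*} {S : ι → Set α}
    (hS : Pairwise fun i j => Disjoint (S i) (S j)) :
    ∃ σ : α → Option ι, ∀ a i, σ a = some i ↔ a ∈ S i := by
  classical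
  refine ⟨fun a => if h : ∃ i, a ∈ S i then some h.choose else none, fun a i => ?_⟩
  dsimp only
  by_cases h : ∃ i, a ∈ S i
  · rw [dif_pos h, Option.some_inj]
    refine ⟨fun hi => hi ▸ h.choose_spec, fun ha => ?_⟩
    by_contra hne
    exact Set.disjoint_left.1 (hS hne) h.choose_spec ha
  · rw [dif_neg h]
    exact iff_of_false (Option.some_ne_none i).symm fun ha => h ⟨i, ha⟩

theorem exists_lt_forall_mod_ne {ι : Type*} {P : ℕ} {s : Finset ι} {p o : ι → ℕ}
    (hdvd : ∀ j ∈ s, p j ∣ P) (hlt : ∑ j ∈ s, P / p j < P) :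
    ∃ c < P, ∀ j ∈ s, c % p j ≠ o j := by
  classical
  set taken := s.biUnion fun j => {c ∈ range P | c % p j = o j}
  have hcard : #taken < #(range P) := calc
    #taken ≤ ∑ j ∈ s, #{c ∈ range P | c % p j = o j} := card_biUnion_le
    _ ≤ ∑ j ∈ s, P / p j :=
      sum_le_sum fun j hj => Nat.card_filter_range_mod_eq_le (hdvd j hj) (o j)
    _ < #(range P) := by rwa [card_range]
  obtain ⟨c, hcP, hc⟩ := exists_mem_notMem_of_card_lt_card hcard
  rw [mem_range] at hcP
  refine ⟨c, hcP, fun j hj hcj => hc ?_⟩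
  exact mem_biUnion.2 ⟨j, hj, mem_filter.2 ⟨mem_range.2 hcP, hcj⟩⟩

theorem sum_div_lt_of_inv_add_sum_inv_le {ι : Type*} {P : ℕ} {s : Finset ι} {p : ι → ℕ}
    (hP : 0 < P) (hdvd : ∀ j ∈ s, p j ∣ P) (h : 1 / (P : ℝ) + ∑ j ∈ s, 1 / (p j : ℝ) ≤ 1) :
    ∑ j ∈ s, P / p j < P := by
  have hP' : (0 : ℝ) < P := Nat.cast_pos.2 hP
  have hcast : ((∑ j ∈ s, P / p j : ℕ) : ℝ) = P * ∑ j ∈ s, 1 / (p j : ℝ) := by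
    rw [Nat.cast_sum, mul_sum]
    refine sum_congr rfl fun j hj => ?_
    have hpj : (p j : ℝ) ≠ 0 := Nat.cast_ne_zero.2 fun h0 => by
      have := hdvd j hj
      rw [h0, zero_dvd_iff] at this
      omega
    rw [Nat.cast_div (hdvd j hj) hpj, mul_one_div]
  have : ((∑ j ∈ s, P / p j : ℕ) : ℝ) < P := calc
    _ = P * ∑ j ∈ s, 1 / (p j : ℝ) := hcast
    _ ≤ P * (1 - 1 / P) := by gcongr; linarith
    _ = P - 1 := by field_simp
    _ < P := sub_one_lt _
  exact_mod_cast this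

theorem exists_pairwiseDisjoint_residueClasses {ι : Type*} (s : Finset ι) (p : ι → ℕ)
    (hp : ∀ i ∈ s, 0 < p i) (hdvd : ∀ i ∈ s, ∀ j ∈ s, p i ≤ p j → p i ∣ p j)
    (hd : ∑ i ∈ s, 1 / (p i : ℝ) ≤ 1) :
    ∃ o : ι → ℕ, (∀ i ∈ s, o i < p i) ∧
      (s : Set ι).PairwiseDisjoint fun i => {t : ℕ | t % p i = o i} := by
  classical
  induction s using Finset.induction_on_max_value p with
  | empty => exact ⟨fun _ => 0, by simp, by simp⟩
  | insert a s ha hmax ih =>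
    rw [sum_insert ha] at hd
    obtain ⟨o, ho, hdisj⟩ := ih (fun i hi => hp i (mem_insert_of_mem hi))
      (fun i hi j hj => hdvd i (mem_insert_of_mem hi) j (mem_insert_of_mem hj))
      ((le_add_of_nonneg_left (by positivity)).trans hd)
    have hdvd_a : ∀ j ∈ s, p j ∣ p a := fun j hj =>
      hdvd j (mem_insert_of_mem hj) a (mem_insert_self a s) (hmax j hj)
    obtain ⟨c, hc, hcfree⟩ := exists_lt_forall_mod_ne (o := o) hdvd_a
      (sum_div_lt_of_inv_add_sum_inv_le (hp a (mem_insert_self a s)) hdvd_a hd)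
    have hupd : ∀ j ∈ s, Function.update o a c j = o j := fun j hj =>
      Function.update_of_ne (ne_of_mem_of_not_mem hj ha) c o
    refine ⟨Function.update o a c, fun i hi => ?_, ?_⟩
    · rcases mem_insert.1 hi with rfl | hi
      · simpa using hc
      · exact hupd i hi ▸ ho i hi
    · rw [coe_insert]
      refine (hdisj.mono_on fun i hi => by rw [hupd i hi]).insert_of_notMem (mem_coe.not.2 ha)
        fun j hj => Set.disjoint_left.2 fun t hta htj => hcfree j hj ?_
      simp only [Set.mem_ofPred_eq, Function.update_self, hupd j hj] at hta htj
      rw [← hta, Nat.mod_mod_of_dvd t (hdvd_a j hj), htj]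

/-- For a divisibility-chain instance of density at most 1 there are
offsets `o i < p i` whose residue classes are pairwise disjoint; consequently the
periodic schedule scheduling job `i` exactly on days `≡ o i (mod p i)` assigns at most
one job per day and is a feasible pinwheel schedule. -/
theorem pinwheel_periodic_offsets (n : ℕ) (p : Fin n → ℕ) (hp : ∀ i, 1 ≤ p i)
    (hdvd : ∀ i j, p i ≤ p j → p i ∣ p j) (hd : ∑ i, 1 / (p i : ℝ) ≤ 1) :
    ∃ o : Fin n → ℕ, (∀ i, o i < p i) ∧
      (∀ i j, i ≠ j → ∀ t : ℕ, ¬(t % p i = o i ∧ t % p j = o j)) ∧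
      ∃ σ : ℕ → Option (Fin n),
        (∀ (t : ℕ) (i : Fin n), σ t = some i ↔ t % p i = o i) ∧
        PinwheelFeasibleN p σ := by
  obtain ⟨o, ho, hdisj⟩ := exists_pairwiseDisjoint_residueClasses univ p (fun i _ => hp i)
    (fun i _ j _ => hdvd i j) hd
  rw [coe_univ, Set.PairwiseDisjoint, Set.pairwise_univ] at hdisj
  obtain ⟨σ, hσ⟩ := exists_option_eq_some_iff_of_pairwise_disjoint hdisj
  refine ⟨o, fun i => ho i (mem_univ i),
    fun i j hij t ⟨hi, hj⟩ => Set.disjoint_left.1 (hdisj hij) hi hj, σ, hσ, fun i t => ?_⟩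
  obtain ⟨s, hts, hst, hs⟩ := Nat.exists_le_lt_add_mod_eq (ho i (mem_univ i)) t
  exact ⟨s, hts, hst, (hσ s i).2 hs⟩
end

section
/- For every natural number M ≥ 1, there is no feasible pinwheel schedule for the 3-job instance with integer periods p 0 = 2, p 1 = 3 and p 2 = M. -/
/- Some day `s ≥ 1` is given to job 2. The job of period 2 must then take days `s - 1` and
`s + 1`, so the window `s - 1, s, s + 1` has no free day for the job of period 3. -/

namespace PinwheelFeasibleN

variable {n : ℕ} {p : Fin n → ℕ} {σ : ℕ → Option (Fin n)}

theorem eq_some_or_eq_some_succ (hσ : PinwheelFeasibleN p σ) {i : Fin n} (hi : p i ≤ 2)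
    (t : ℕ) : σ t = some i ∨ σ (t + 1) = some i := by
  obtain ⟨s, hts, hst, hs⟩ := hσ i t
  obtain rfl | rfl : s = t ∨ s = t + 1 := by omega
  exacts [.inl hs, .inr hs]

theorem eq_some_or_eq_some_succ_or_eq_some_add_two (hσ : PinwheelFeasibleN p σ) {i : Fin n}
    (hi : p i ≤ 3) (t : ℕ) : σ t = some i ∨ σ (t + 1) = some i ∨ σ (t + 2) = some i := by
  obtain ⟨s, hts, hst, hs⟩ := hσ i t
  obtain rfl | rfl | rfl : s = t ∨ s = t + 1 ∨ s = t + 2 := by omega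
  exacts [.inl hs, .inr (.inl hs), .inr (.inr hs)]

end PinwheelFeasibleN

theorem no_pinwheel_two_three_M_general (M : ℕ) :
    ¬ ∃ σ : ℕ → Option (Fin 3), PinwheelFeasibleN ![2, 3, M] σ := by
  rintro ⟨σ, hσ⟩
  obtain ⟨s, hs, -, hσs⟩ := hσ 2 1
  obtain ⟨t, rfl⟩ : ∃ t, s = t + 1 := ⟨s - 1, by omega⟩
  have h₀ := hσ.eq_some_or_eq_some_succ (i := 0) le_rfl t
  have h₀' := hσ.eq_some_or_eq_some_succ (i := 0) le_rfl (t + 1)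
  have h₁ := hσ.eq_some_or_eq_some_succ_or_eq_some_add_two (i := 1) le_rfl t
  rcases h₁ with h₁ | h₁ | h₁ <;> simp_all

/-- For every M ≥ 1 the integer instance {2, 3, M} admits no feasible
pinwheel schedule (Chan and Chin). -/
theorem no_pinwheel_two_three_M (M : ℕ) (hM : 1 ≤ M) :
    ¬ ∃ σ : ℕ → Option (Fin 3), PinwheelFeasibleN ![2, 3, M] σ :=
  no_pinwheel_two_three_M_general M
end

section
/- For every δ > 0 there exist an n ≥ 1 and real periods p : Fin n → ℝ with p i ≥ 2 for all i and ∑ i, 1 / p i ≤ 7/12 + δ, such that there is no feasible pinwheel schedule for the pseudo-instance p. (Concretely, for any 0 < ε ≤ 1 and sufficiently large real M, the pseudo-instance with periods 3 − ε, 4 − ε, M has density 7/12 + ε/(9 − 3ε) + ε/(16 − 4ε) + 1/M and admits no feasible schedule.) -/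
/-!
Days `s - 1`, `s + 1` around any day `s` given to a third job must both go to the job of
period `2`, so the window `{s - 1, s, s + 1}` has no room for the job of period `3`. Hence the
integer instance `{2, 3, M}` is infeasible for every `M`, and so is the pseudo-instance
`{3 - ε, 4 - ε, M}` with the same floors, whose density tends to `1/3 + 1/4 = 7/12`.
-/

theorem not_pinwheelFeasibleN_of_le_two_of_le_three {n : ℕ} {p : Fin n → ℕ} {i j k : Fin n}
    (hij : i ≠ j) (hik : i ≠ k) (hjk : j ≠ k) (hi : p i ≤ 2) (hj : p j ≤ 3)
    (σ : ℕ → Option (Fin n)) : ¬ PinwheelFeasibleN p σ := by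
  intro hσ
  have hσ_eq : ∀ {t a b}, σ t = some a → σ t = some b → a = b := fun ha hb =>
    Option.some_injective _ (ha.symm.trans hb)
  obtain ⟨s, hs, -, hsk⟩ := hσ k 1
  have hbefore : σ (s - 1) = some i := by
    obtain ⟨u, hu₁, hu₂, hu⟩ := hσ i (s - 1)
    obtain rfl | rfl : u = s - 1 ∨ u = s := by omega
    · exact hu
    · exact absurd (hσ_eq hu hsk) hik
  have hafter : σ (s + 1) = some i := by
    obtain ⟨w, hw₁, hw₂, hw⟩ := hσ i s
    obtain rfl | rfl : w = s ∨ w = s + 1 := by omega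
    · exact absurd (hσ_eq hw hsk) hik
    · exact hw
  obtain ⟨v, hv₁, hv₂, hv⟩ := hσ j (s - 1)
  obtain rfl | rfl | rfl : v = s - 1 ∨ v = s ∨ v = s + 1 := by omega
  · exact hij (hσ_eq hbefore hv)
  · exact hjk (hσ_eq hv hsk)
  · exact hij (hσ_eq hafter hv)

/-- The paper's periods `3 - ε, 4 - ε, M`, rescaled so that the density is linear in `d`. -/
noncomputable def example1Periods (d : ℝ) : Fin 3 → ℝ :=
  ![3 / (1 + d), 4 / (1 + d), 3 / d]

theorem sum_one_div_example1Periods (d : ℝ) :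
    ∑ i, 1 / example1Periods d i = 7 / 12 + 11 / 12 * d := by
  simp only [Fin.sum_univ_three, example1Periods, Matrix.cons_val_zero, Matrix.cons_val_one,
    Matrix.cons_val_two, Matrix.head_cons, Matrix.tail_cons, one_div_div]
  ring

theorem two_le_example1Periods {d : ℝ} (hd : 0 < d) (hd₃ : d ≤ 1 / 3) (i : Fin 3) :
    2 ≤ example1Periods d i := by
  fin_cases i <;> simp only [example1Periods, Fin.zero_eta, Fin.mk_one, Fin.reduceFinMk,
    Matrix.cons_val_zero, Matrix.cons_val_one, Matrix.cons_val_two, Matrix.head_cons,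
    Matrix.tail_cons] <;> rw [le_div_iff₀ (by positivity)] <;> linarith

theorem not_pinwheelFeasibleR_example1Periods {d : ℝ} (hd : 0 < d) (σ : ℕ → Option (Fin 3)) :
    ¬ PinwheelFeasibleR (example1Periods d) σ := by
  have floor_le {a : ℝ} (m : ℕ) (ha : a ≤ m + 1) : ⌊a / (1 + d)⌋₊ ≤ m := by
    refine Nat.le_of_lt_succ ((Nat.floor_lt' m.succ_ne_zero).2 ?_)
    rw [div_lt_iff₀ (by positivity)]
    push_cast
    nlinarith
  exact not_pinwheelFeasibleN_of_le_two_of_le_three (p := fun i => ⌊example1Periods d i⌋₊)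
    (i := 0) (j := 1) (k := 2) (by decide) (by decide) (by decide)
    (floor_le (a := 3) 2 (by norm_num)) (floor_le (a := 4) 3 (by norm_num)) σ

/-- For every δ > 0 there is a pseudo-instance with all periods at least 2
and density at most 7/12 + δ that admits no feasible pinwheel schedule (Example 1). -/
theorem no_pinwheel_density_just_above_seven_twelfths (δ : ℝ) (hδ : 0 < δ) :
    ∃ n : ℕ, 1 ≤ n ∧ ∃ p : Fin n → ℝ, (∀ i, 2 ≤ p i) ∧
      (∑ i, 1 / p i ≤ 7 / 12 + δ) ∧
      ¬ ∃ σ : ℕ → Option (Fin n), PinwheelFeasibleR p σ := by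
  obtain ⟨d, hd, hd₃, hdδ⟩ : ∃ d : ℝ, 0 < d ∧ d ≤ 1 / 3 ∧ d ≤ δ :=
    ⟨min δ (1 / 3), lt_min hδ (by norm_num), min_le_right _ _, min_le_left _ _⟩
  refine ⟨3, by norm_num, example1Periods d, two_le_example1Periods hd hd₃, ?_,
    not_exists.2 (not_pinwheelFeasibleR_example1Periods hd)⟩
  rw [sum_one_div_example1Periods]
  linarith
end

section
/- For every η with 0 < η < 12/7 there exist growth rates h : Fin 3 → ℝ with h i > 0 for all i such that, setting H = ∑ i, h i and p i = (12/7 − η) · H / h i, there is no feasible pinwheel schedule for the pseudo-instance p. (Concretely, h 0 = 4, h 1 = 3, h 2 = γ works for any 0 < γ < 49η/(12 − 7η).) -/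
/-! The instance `{2, 3, M}` admits no schedule: any day `d + 1` given to the third job is
flanked by two days given to the job of period 2, so the window `{d, d + 1, d + 2}` misses
the job of period 3. With `h = (4, 3, γ)` and `H = 7 + γ`, the scaled periods `c H / 4` and
`c H / 3` stay below 3 and 4 as soon as `c (7 + γ) < 12`, which for `c = 12/7 - η` holds with
`γ = 49η/24`. -/

lemma PinwheelFeasibleR.exists_mem_window {n : ℕ} {p : Fin n → ℝ} {σ : ℕ → Option (Fin n)}
    (hσ : PinwheelFeasibleR p σ) {i : Fin n} {m : ℕ} (hm : ⌊p i⌋₊ ≤ m) (t : ℕ) :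
    ∃ s, t ≤ s ∧ s < t + m ∧ σ s = some i := by
  obtain ⟨s, hts, hst, hs⟩ := hσ i t
  exact ⟨s, hts, by omega, hs⟩

lemma false_of_windows_two_three {α : Type*} {σ : ℕ → Option α} {a b c : α}
    (hab : a ≠ b) (hac : a ≠ c) (hbc : b ≠ c)
    (ha : ∀ t, ∃ s, t ≤ s ∧ s < t + 2 ∧ σ s = some a)
    (hb : ∀ t, ∃ s, t ≤ s ∧ s < t + 3 ∧ σ s = some b)
    {d : ℕ} (hc : σ (d + 1) = some c) : False := by
  have hd : σ d = some a := by
    obtain ⟨s, h₁, h₂, hs⟩ := ha d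
    obtain rfl | rfl : s = d ∨ s = d + 1 := by omega
    · exact hs
    · exact absurd (Option.some_injective _ (hs.symm.trans hc)) hac
  have hd₂ : σ (d + 2) = some a := by
    obtain ⟨s, h₁, h₂, hs⟩ := ha (d + 1)
    obtain rfl | rfl : s = d + 1 ∨ s = d + 2 := by omega
    · exact absurd (Option.some_injective _ (hs.symm.trans hc)) hac
    · exact hs
  obtain ⟨s, h₁, h₂, hs⟩ := hb d
  obtain rfl | rfl | rfl : s = d ∨ s = d + 1 ∨ s = d + 2 := by omega
  · exact hab (Option.some_injective _ (hd.symm.trans hs))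
  · exact hbc (Option.some_injective _ (hs.symm.trans hc))
  · exact hab (Option.some_injective _ (hd₂.symm.trans hs))

theorem not_pinwheelFeasibleR_of_floor_le_two_three {n : ℕ} {p : Fin n → ℝ}
    (σ : ℕ → Option (Fin n)) {a b c : Fin n} (hab : a ≠ b) (hac : a ≠ c) (hbc : b ≠ c)
    (ha : ⌊p a⌋₊ ≤ 2) (hb : ⌊p b⌋₊ ≤ 3) : ¬ PinwheelFeasibleR p σ := by
  intro hσ
  obtain ⟨d, hd, -, hdc⟩ := hσ c 1
  obtain ⟨d, rfl⟩ := Nat.exists_eq_add_of_le' hd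
  exact false_of_windows_two_three hab hac hbc (hσ.exists_mem_window ha)
    (hσ.exists_mem_window hb) hdc

lemma Nat.floor_le_of_lt_add_one {R : Type*} [Semiring R] [LinearOrder R] [IsStrictOrderedRing R]
    [FloorSemiring R] {x : R} {m : ℕ} (hx : x < m + 1) : ⌊x⌋₊ ≤ m :=
  Nat.lt_add_one_iff.mp ((Nat.floor_lt' m.succ_ne_zero).mpr (by exact_mod_cast hx))

theorem bgt_reduction_tightness_general (η : ℝ) (hη₀ : 0 < η) :
    ∃ h : Fin 3 → ℝ, (∀ i, 0 < h i) ∧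
      ¬ ∃ σ : ℕ → Option (Fin 3),
        PinwheelFeasibleR (fun i => (12 / 7 - η) * (∑ j, h j) / h i) σ := by
  refine ⟨![4, 3, 49 * η / 24], fun i => by fin_cases i <;> simp; positivity, ?_⟩
  rintro ⟨σ, hσ⟩
  have hmag : (12 / 7 - η) * (4 + 3 + 49 * η / 24) < 12 := by nlinarith
  refine not_pinwheelFeasibleR_of_floor_le_two_three σ (a := 0) (b := 1) (c := 2)
    (by decide) (by decide) (by decide) ?_ ?_ hσ
  all_goals
    simp only [Fin.sum_univ_three, Matrix.cons_val]
    apply Nat.floor_le_of_lt_add_one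
    push_cast
    linarith

/-- For every magnifying factor 12/7 - η with 0 < η < 12/7 there are
growth rates on three bamboos whose induced pseudo-instance
`p i = (12/7 - η) · H / h i` (with `H = ∑ i, h i`) is not schedulable (Example 2). -/
theorem bgt_reduction_tightness (η : ℝ) (hη₀ : 0 < η) (hη₁ : η < 12 / 7) :
    ∃ h : Fin 3 → ℝ, (∀ i, 0 < h i) ∧
      ¬ ∃ σ : ℕ → Option (Fin 3),
        PinwheelFeasibleR (fun i => (12 / 7 - η) * (∑ j, h j) / h i) σ :=
  bgt_reduction_tightness_general η hη₀
end

section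
/- Let p : Fin n → ℕ be integer periods with p i ≥ 1 for all i, and define growth rates h i = 1 / (p i : ℝ). Then there exists a feasible pinwheel schedule for p if and only if there exists a trimming schedule for h that achieves value 1. -/
/-!
The same schedule works in both directions: bamboo `i`, growing by `1 / p i` a day, stays at
height at most `1` exactly when it is never left uncut for more than `p i` consecutive days,
which is the pinwheel window condition for job `i`.
-/

section LastCut

variable {n : ℕ} (σ : ℕ → Option (Fin n)) (i : Fin n)

lemma lastCutPlusOne_le (t : ℕ) : lastCutPlusOne σ i t ≤ t :=
  Nat.findGreatest_le t

variable {σ i}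

lemma succ_le_lastCutPlusOne {s t : ℕ} (hst : s < t) (hs : σ s = some i) :
    s + 1 ≤ lastCutPlusOne σ i t :=
  Nat.le_findGreatest hst ⟨s.succ_pos, hs⟩

lemma lastCutPlusOne_sub_one_eq_some {t : ℕ} (hpos : 0 < lastCutPlusOne σ i t) :
    σ (lastCutPlusOne σ i t - 1) = some i :=
  (Nat.findGreatest_of_ne_zero rfl hpos.ne').2

lemma forall_exists_in_window_iff_le_lastCutPlusOne_add (w : ℕ) :
    (∀ t, ∃ s, t ≤ s ∧ s < t + w ∧ σ s = some i) ↔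
      ∀ t, t + 1 ≤ lastCutPlusOne σ i t + w := by
  constructor
  · intro hwin t
    rcases lt_or_ge t w with htw | hwt
    · omega
    obtain ⟨s, hs_ge, hs_lt, hs⟩ := hwin (t - w)
    have := succ_le_lastCutPlusOne (t := t) (by omega) hs
    omega
  · intro hgap t
    set L := lastCutPlusOne σ i (t + w)
    have hL_le : L ≤ t + w := lastCutPlusOne_le σ i (t + w)
    have hL_gt : t < L := by have := hgap (t + w); omega
    exact ⟨L - 1, by omega, by omega, lastCutPlusOne_sub_one_eq_some (by omega)⟩

end LastCut

lemma pinwheelFeasibleN_iff {n : ℕ} (p : Fin n → ℕ) (σ : ℕ → Option (Fin n)) :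
    PinwheelFeasibleN p σ ↔ ∀ i t, t + 1 ≤ lastCutPlusOne σ i t + p i :=
  forall_congr' fun i => forall_exists_in_window_iff_le_lastCutPlusOne_add (p i)

lemma bambooHeight_one_div_le_one_iff {n : ℕ} (p : Fin n → ℕ) (σ : ℕ → Option (Fin n))
    {i : Fin n} (hpi : 0 < p i) (t : ℕ) :
    bambooHeight (fun i => 1 / (p i : ℝ)) σ i t ≤ 1 ↔ t + 1 ≤ lastCutPlusOne σ i t + p i := by
  rw [bambooHeight, one_div, inv_mul_le_iff₀ (by exact_mod_cast hpi), mul_one,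
    sub_le_iff_le_add']
  norm_cast

lemma trimmingAchieves_one_div_iff {n : ℕ} (p : Fin n → ℕ) (hp : ∀ i, 0 < p i)
    (σ : ℕ → Option (Fin n)) :
    TrimmingAchieves (fun i => 1 / (p i : ℝ)) σ 1 ↔
      ∀ i t, t + 1 ≤ lastCutPlusOne σ i t + p i :=
  forall_congr' fun i => forall_congr' (bambooHeight_one_div_le_one_iff p σ (hp i))

/-- Reduction from Pinwheel Scheduling to BGT: the integer instance `p`
is schedulable iff the BGT instance with growth rates `1 / p i` has a trimming schedule
of value 1. -/
theorem pinwheel_iff_bgt_value_one (n : ℕ) (p : Fin n → ℕ) (hp : ∀ i, 1 ≤ p i) :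
    (∃ σ : ℕ → Option (Fin n), PinwheelFeasibleN p σ) ↔
      (∃ σ : ℕ → Option (Fin n),
        TrimmingAchieves (fun i => 1 / (p i : ℝ)) σ 1) :=
  exists_congr fun σ =>
    (pinwheelFeasibleN_iff p σ).trans (trimmingAchieves_one_div_iff p hp σ).symm
end

section
/- Let h : Fin n → ℝ be growth rates with h i > 0 for all i, let H = ∑ i, h i, let c > 0 be a real number, and define real periods p i = c · H / h i. If σ : ℕ → Option (Fin n) is a feasible pinwheel schedule for the pseudo-instance p, then σ, interpreted as a trimming schedule for h, achieves value c · H (i.e., no bamboo ever reaches a height exceeding c · H). -/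
/-! A feasible schedule cuts bamboo `i` at least once in every window of `q i` days, so at
most `q i` days have passed since its last cut and its height never exceeds `h i * q i`. With
`q i = ⌊c · H / h i⌋` this is at most `c · H`. -/

theorem le_lastCutPlusOne {n : ℕ} {σ : ℕ → Option (Fin n)} {i : Fin n} {s t : ℕ}
    (hst : s < t) (hs : σ s = some i) : s + 1 ≤ lastCutPlusOne σ i t :=
  Nat.le_findGreatest hst ⟨s.succ_pos, hs⟩

namespace PinwheelFeasibleN

variable {n : ℕ} {q : Fin n → ℕ} {σ : ℕ → Option (Fin n)}

theorem period_pos (hσ : PinwheelFeasibleN q σ) (i : Fin n) : 0 < q i := by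
  obtain ⟨s, hts, hst, -⟩ := hσ i 0
  omega

theorem succ_le_lastCutPlusOne_add (hσ : PinwheelFeasibleN q σ) (i : Fin n) (t : ℕ) :
    t + 1 ≤ lastCutPlusOne σ i t + q i := by
  rcases lt_or_ge t (q i) with htq | hqt
  · omega
  obtain ⟨s, hts, hst, hs⟩ := hσ i (t - q i)
  have := le_lastCutPlusOne (by omega : s < t) hs
  omega

theorem bambooHeight_le (hσ : PinwheelFeasibleN q σ) {h : Fin n → ℝ} {i : Fin n}
    (hh : 0 ≤ h i) (t : ℕ) : bambooHeight h σ i t ≤ h i * q i := by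
  have hgap : (t : ℝ) + 1 ≤ lastCutPlusOne σ i t + q i := by
    exact_mod_cast hσ.succ_le_lastCutPlusOne_add i t
  exact mul_le_mul_of_nonneg_left (by linarith) hh

end PinwheelFeasibleN

theorem trimming_of_pinwheel_general (n : ℕ) (h : Fin n → ℝ) (hpos : ∀ i, 0 < h i)
    (c : ℝ) (σ : ℕ → Option (Fin n))
    (hσ : PinwheelFeasibleR (fun i => c * (∑ j, h j) / h i) σ) :
    TrimmingAchieves h σ (c * ∑ j, h j) := by
  set p : Fin n → ℝ := fun i => c * (∑ j, h j) / h i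
  have hσN : PinwheelFeasibleN (fun i => ⌊p i⌋₊) σ := hσ
  intro i t
  have hfloor : (⌊p i⌋₊ : ℝ) ≤ p i :=
    Nat.floor_le (zero_le_one.trans (Nat.floor_pos.mp (hσN.period_pos i)))
  calc bambooHeight h σ i t ≤ h i * ⌊p i⌋₊ := hσN.bambooHeight_le (hpos i).le t
    _ ≤ h i * p i := mul_le_mul_of_nonneg_left hfloor (hpos i).le
    _ = c * ∑ j, h j := mul_div_cancel₀ _ (hpos i).ne'

/-- Correctness of the reduction from BGT to Pinwheel: a feasible schedule
for the pseudo-instance `p i = c · H / h i` achieves value `c · H` as a trimming schedule. -/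
theorem trimming_of_pinwheel (n : ℕ) (h : Fin n → ℝ) (hpos : ∀ i, 0 < h i)
    (c : ℝ) (hc : 0 < c) (σ : ℕ → Option (Fin n))
    (hσ : PinwheelFeasibleR (fun i => c * (∑ j, h j) / h i) σ) :
    TrimmingAchieves h σ (c * ∑ j, h j) :=
  trimming_of_pinwheel_general n h hpos c σ hσ
end

section
/- Let p : Fin n → ℕ be integer periods with p i ≥ 1 for all i, such that for all i, j, if p i ≤ p j then p i divides p j, and such that ∑ i, 1 / (p i : ℝ) ≤ 1. Let m be the minimum of the p i. Then there exists a partition of Fin n into at most m sets S_1, …, S_k (k ≤ m) such that for each j, ∑_{i ∈ S_j} 1 / (p i : ℝ) ≤ 1 / m. -/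
open Finset AddSubgroup

section Packing

variable {G : Type*} [AddCommGroup G] [LinearOrder G] [IsOrderedAddMonoid G]

theorem add_le_of_lt_of_mem_zmultiples {w a b : G} (hw : 0 < w) (ha : a ∈ zmultiples w)
    (hb : b ∈ zmultiples w) (hab : a < b) : a + w ≤ b := by
  obtain ⟨M, rfl⟩ := mem_zmultiples_iff.1 ha
  obtain ⟨N, rfl⟩ := mem_zmultiples_iff.1 hb
  have hMN : M + 1 ≤ N := (zsmul_lt_zsmul_iff_left hw).1 hab
  calc M • w + w = (M + 1) • w := by rw [add_zsmul, one_zsmul]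
    _ ≤ N • w := zsmul_le_zsmul_left hw.le hMN

theorem exists_packing_of_mem_zmultiples {α : Type*} (w : α → G) (c : G) (k : ℕ) [NeZero k]
    (hw : ∀ i, 0 < w i) (hchain : ∀ i j, w j ≤ w i → w i ∈ zmultiples (w j))
    (hc : ∀ i, c ∈ zmultiples (w i)) (s : Finset α) (hs : ∑ i ∈ s, w i ≤ k • c) :
    ∃ g : α → Fin k, ∀ j, ∑ i ∈ s with g i = j, w i ≤ c := by
  classical
  -- Insert the items by increasing size: all loads are multiples of the new size `w a`,
  -- so a bin with load below `c` still has room `w a`.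
  induction s using Finset.induction_on_min_value w with
  | empty =>
    have hc0 : 0 ≤ c := (nsmul_nonneg_iff (NeZero.ne k)).1 (by simpa using hs)
    exact ⟨fun _ => 0, fun _ => by simpa using hc0⟩
  | insert a s ha hmin ih =>
    rw [sum_insert ha] at hs
    have hs' : ∑ i ∈ s, w i < k • c := (lt_add_of_pos_left _ (hw a)).trans_le hs
    obtain ⟨g, hg⟩ := ih hs'.le
    obtain ⟨j, -, hj⟩ : ∃ j ∈ univ, ∑ i ∈ s with g i = j, w i < c :=
      exists_lt_of_sum_lt <| by rwa [sum_fiberwise, sum_const, card_univ, Fintype.card_fin]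
    have hload : ∑ i ∈ s with g i = j, w i ∈ zmultiples (w a) :=
      sum_mem fun i hi => hchain i a (hmin i (mem_filter.1 hi).1)
    refine ⟨Function.update g a j, fun j' => ?_⟩
    have hfilter : ∀ p : Fin k → Prop, [DecidablePred p] →
        (s.filter fun i => p (Function.update g a j i)) = s.filter fun i => p (g i) :=
      fun p _ => filter_congr fun i hi => by rw [Function.update_of_ne (ne_of_mem_of_not_mem hi ha)]
    rw [filter_insert, Function.update_self, hfilter (· = j')]
    split_ifs with hjj'
    · subst hjj'
      rw [sum_insert (fun h => ha (mem_filter.1 h).1), add_comm]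
      exact add_le_of_lt_of_mem_zmultiples (hw a) hload (hc a) hj
    · exact hg j'

end Packing

theorem one_div_natCast_mem_zmultiples {K : Type*} [Field K] [CharZero K] {a b : ℕ}
    (hab : a ∣ b) (hb : b ≠ 0) : 1 / (a : K) ∈ zmultiples (1 / (b : K)) := by
  obtain ⟨c, rfl⟩ := hab
  have ha : (a : K) ≠ 0 := Nat.cast_ne_zero.2 (left_ne_zero_of_mul hb)
  have hc : (c : K) ≠ 0 := Nat.cast_ne_zero.2 (right_ne_zero_of_mul hb)
  refine mem_zmultiples_iff.2 ⟨c, ?_⟩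
  rw [zsmul_eq_mul, Int.cast_natCast, Nat.cast_mul]
  field_simp

/-- Partition lemma: a divisibility-chain instance of density at most 1
with minimum period m can be partitioned into k ≤ m groups each of density at most 1/m. -/
theorem pinwheel_partition_lemma (n : ℕ) (p : Fin n → ℕ) (hp : ∀ i, 1 ≤ p i)
    (hdvd : ∀ i j, p i ≤ p j → p i ∣ p j) (hd : ∑ i, 1 / (p i : ℝ) ≤ 1)
    (m : ℕ) (hm_le : ∀ i, m ≤ p i) (hm_mem : ∃ i, p i = m) :
    ∃ k : ℕ, k ≤ m ∧ ∃ S : Fin k → Finset (Fin n),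
      (∀ i : Fin n, ∃! j : Fin k, i ∈ S j) ∧
      (∀ j : Fin k, ∑ i ∈ S j, 1 / (p i : ℝ) ≤ 1 / (m : ℝ)) := by
  obtain ⟨i₀, rfl⟩ := hm_mem
  have : NeZero (p i₀) := ⟨Nat.one_le_iff_ne_zero.1 (hp i₀)⟩
  have hpos : ∀ i, (0 : ℝ) < p i := fun i => by exact_mod_cast hp i
  have hmul : ∀ {i j}, p i ∣ p j → 1 / (p i : ℝ) ∈ zmultiples (1 / (p j : ℝ)) :=
    fun h => one_div_natCast_mem_zmultiples h (by exact_mod_cast (hpos _).ne')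
  obtain ⟨g, hg⟩ := exists_packing_of_mem_zmultiples (fun i => 1 / (p i : ℝ)) (1 / (p i₀ : ℝ))
    (p i₀) (fun i => one_div_pos.2 (hpos i))
    (fun i j hij => hmul (hdvd i j <| by
      exact_mod_cast (one_div_le_one_div (hpos j) (hpos i)).1 hij))
    (fun i => hmul (hdvd i₀ i (hm_le i))) univ
    (by rwa [nsmul_eq_mul, mul_one_div_cancel (hpos i₀).ne'])
  exact ⟨p i₀, le_rfl, fun j => univ.filter (g · = j),
    fun i => ⟨g i, by simp, fun j hj => (mem_filter.1 hj).2.symm⟩, hg⟩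
end

section
/- Let m ≥ 1 be an integer and let p : Fin n → ℕ be integer periods such that m divides p i and p i ≥ m for all i. Let S_1, …, S_k be a partition of Fin n with k ≤ m. If for each j ∈ {1, …, k} the instance consisting of the jobs i ∈ S_j with periods p i / m admits a feasible pinwheel schedule, then the instance p admits a feasible pinwheel schedule. (Explicitly, if job i ∈ S_j is scheduled for the ℓ-th time on day σ_j(i, ℓ) in the subschedule, scheduling it for the ℓ-th time on day j + (σ_j(i, ℓ) − 1) · m in the combined schedule is feasible and assigns at most one job per day.) -/
/-- Days and classes are counted from `0`, so the paper's day `j + (s - 1) * m` of class `S_j`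
becomes day `m * s + j`. -/
def interleave {α : Type*} {k : ℕ} (m : ℕ) (σ : Fin k → ℕ → Option α) (t : ℕ) : Option α :=
  if h : t % m < k then σ ⟨t % m, h⟩ (t / m) else none

def HitsEveryWindow {α : Type*} (τ : ℕ → Option α) (a : α) (q : ℕ) : Prop :=
  ∀ t, ∃ s, t ≤ s ∧ s < t + q ∧ τ s = some a

theorem Nat.exists_mul_add_mem_Ico {m j : ℕ} (hj : j < m) (t : ℕ) :
    ∃ b, m * b + j ∈ Set.Ico t (t + m) := by
  refine ⟨(t + (m - 1 - j)) / m, Set.mem_Ico.2 ?_⟩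
  have hdiv := Nat.div_add_mod (t + (m - 1 - j)) m
  have hmod := Nat.mod_lt (t + (m - 1 - j)) (by omega : 0 < m)
  omega

section interleave

variable {α : Type*} {k m : ℕ}

theorem interleave_mul_add (hk : k ≤ m) (σ : Fin k → ℕ → Option α) (j : Fin k) (s : ℕ) :
    interleave m σ (m * s + j) = σ j s := by
  have hjm : (j : ℕ) < m := j.isLt.trans_le hk
  have hmod : (m * s + j) % m = j := by rw [Nat.mul_add_mod, Nat.mod_eq_of_lt hjm]
  have hdiv : (m * s + j) / m = s := by
    rw [Nat.mul_add_div (by omega), Nat.div_eq_of_lt hjm, add_zero]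
  simp only [interleave, hmod, hdiv, j.isLt, dite_true]

theorem HitsEveryWindow.interleave (hk : k ≤ m) {σ : Fin k → ℕ → Option α} {j : Fin k}
    {a : α} {q : ℕ} (h : HitsEveryWindow (σ j) a q) :
    HitsEveryWindow (interleave m σ) a (m * q) := by
  intro t
  obtain ⟨b, htb, hbt⟩ := Nat.exists_mul_add_mem_Ico (j.isLt.trans_le hk) t
  obtain ⟨s, hbs, hsq, hs⟩ := h b
  refine ⟨m * s + j, ?_, ?_, by rwa [interleave_mul_add hk]⟩
  · nlinarith
  · nlinarith

end interleave

theorem pinwheel_interleaving_general (n m k : ℕ) (p : Fin n → ℕ)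
    (hdvd : ∀ i, m ∣ p i)
    (hk : k ≤ m) (S : Fin k → Finset (Fin n))
    (hpart : ∀ i : Fin n, ∃! j : Fin k, i ∈ S j)
    (hsub : ∀ j : Fin k, ∃ σj : ℕ → Option (Fin n),
      (∀ (t : ℕ) (i : Fin n), σj t = some i → i ∈ S j) ∧
      (∀ i ∈ S j, ∀ t : ℕ, ∃ s : ℕ, t ≤ s ∧ s < t + p i / m ∧ σj s = some i)) :
    ∃ σ : ℕ → Option (Fin n), PinwheelFeasibleN p σ := by
  choose σ _ hσ using hsub
  refine ⟨interleave m σ, fun i => ?_⟩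
  obtain ⟨j, hij, -⟩ := hpart i
  have hwindow : HitsEveryWindow (interleave m σ) i (m * (p i / m)) :=
    HitsEveryWindow.interleave hk (hσ j i hij)
  rwa [Nat.mul_div_cancel' (hdvd i)] at hwindow

/-- Interleaving lemma: if `m` divides every period, the jobs are
partitioned into `k ≤ m` groups, and each group admits a feasible pinwheel schedule
for the scaled-down periods `p i / m`, then the whole instance admits a feasible
pinwheel schedule. -/
theorem pinwheel_interleaving (n m k : ℕ) (hm : 1 ≤ m) (p : Fin n → ℕ)
    (hdvd : ∀ i, m ∣ p i) (hge : ∀ i, m ≤ p i)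
    (hk : k ≤ m) (S : Fin k → Finset (Fin n))
    (hpart : ∀ i : Fin n, ∃! j : Fin k, i ∈ S j)
    (hsub : ∀ j : Fin k, ∃ σj : ℕ → Option (Fin n),
      (∀ (t : ℕ) (i : Fin n), σj t = some i → i ∈ S j) ∧
      (∀ i ∈ S j, ∀ t : ℕ, ∃ s : ℕ, t ≤ s ∧ s < t + p i / m ∧ σj s = some i)) :
    ∃ σ : ℕ → Option (Fin n), PinwheelFeasibleN p σ :=
  pinwheel_interleaving_general n m k p hdvd hk S hpart hsub
end

section
/- Let n ≥ 2 and let h : Fin n → ℝ be growth rates with h i > 0 for all i. If a trimming schedule σ for h achieves value V (every bamboo's height on every day is at most V), then V ≥ 2 · max_i h i. -/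
/-!
Bamboo `i` of maximal growth rate reaches height at least `2 * h i` on the day after any day on
which it is not cut. Such a day exists: some other bamboo `j` must be cut at some point, since
otherwise its height `h j * (t + 1)` would be unbounded.
-/

section Trimming

variable {n : ℕ} {h : Fin n → ℝ} {σ : ℕ → Option (Fin n)} {V : ℝ} {i : Fin n}

lemma lastCutPlusOne_succ_le_of_ne {t : ℕ} (ht : σ t ≠ some i) :
    lastCutPlusOne σ i (t + 1) ≤ t := by
  refine Nat.le_of_lt_succ (lt_of_le_of_ne (Nat.findGreatest_le _) fun heq => ht ?_)
  exact ((Nat.findGreatest_eq_iff.1 heq).2.1 t.succ_ne_zero).2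

lemma lastCutPlusOne_eq_zero_of_forall_ne (hi : ∀ s, σ s ≠ some i) (t : ℕ) :
    lastCutPlusOne σ i t = 0 :=
  Nat.findGreatest_eq_zero_iff.2 fun _ _ _ hcut => hi _ hcut.2

lemma two_mul_le_bambooHeight_succ (hi : 0 ≤ h i) {t : ℕ} (ht : σ t ≠ some i) :
    2 * h i ≤ bambooHeight h σ i (t + 1) := by
  have hlast : (lastCutPlusOne σ i (t + 1) : ℝ) ≤ t := by
    exact_mod_cast lastCutPlusOne_succ_le_of_ne ht
  unfold bambooHeight
  push_cast
  nlinarith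

lemma bambooHeight_of_forall_ne (hi : ∀ s, σ s ≠ some i) (t : ℕ) :
    bambooHeight h σ i t = h i * (t + 1) := by
  simp [bambooHeight, lastCutPlusOne_eq_zero_of_forall_ne hi]

namespace TrimmingAchieves

lemma exists_cut (hach : TrimmingAchieves h σ V) (hi : 0 < h i) : ∃ t, σ t = some i := by
  by_contra! hnever
  obtain ⟨t, ht⟩ := exists_nat_gt (V / h i)
  have hV : h i * (t + 1) ≤ V := bambooHeight_of_forall_ne hnever t ▸ hach i t
  rw [div_lt_iff₀ hi] at ht
  linarith

lemma two_mul_le (hach : TrimmingAchieves h σ V) (hi : 0 ≤ h i) {t : ℕ} (ht : σ t ≠ some i) :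
    2 * h i ≤ V :=
  (two_mul_le_bambooHeight_succ hi ht).trans (hach i (t + 1))

end TrimmingAchieves

end Trimming

/-- For n ≥ 2, twice the maximum growth rate is a lower bound on the
value of any trimming schedule (Della Croce). -/
theorem trimming_value_ge_two_max (n : ℕ) (hn : 2 ≤ n) (h : Fin n → ℝ)
    (hpos : ∀ i, 0 < h i) (σ : ℕ → Option (Fin n)) (V : ℝ)
    (hach : TrimmingAchieves h σ V) :
    2 * Finset.univ.sup' ⟨⟨0, by omega⟩, Finset.mem_univ _⟩ h ≤ V := by
  obtain ⟨i, -, himax⟩ := Finset.exists_mem_eq_sup' ⟨⟨0, by omega⟩, Finset.mem_univ _⟩ h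
  have : Nontrivial (Fin n) := Fin.nontrivial_iff_two_le.mpr hn
  obtain ⟨j, hji⟩ := exists_ne i
  obtain ⟨t, hcut⟩ := hach.exists_cut (hpos j)
  rw [himax]
  exact hach.two_mul_le (hpos i).le (t := t) (by simpa [hcut] using hji)
end
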